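/- arXiv:1208.0232 — 6 statements merged into one kernel-verified Lean document; each statement's English description precedes it below -/
import Mathlib

section
/- Let w : ℝ × ℝ → ℝ be a smooth function with w(t,x) ≠ 0 for all (t,x) such that the function u := 2 w_x / w solves the Burgers equation u_t + u·u_x + u_xx = 0 on all of ℝ × ℝ. Then there exists a function λ : ℝ → ℝ such that w_t(t,x) + w_xx(t,x) = λ(t)·w(t,x) for all (t,x); in particular (w_t + w_xx)/w does not depend on x. -/
/-- Partial derivative with respect to the first variable `t`. -/
noncomputable def pt (f : ℝ × ℝ → ℝ) : ℝ × ℝ → ℝ :=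
  fun p => deriv (fun s => f (s, p.2)) p.1
/-- Partial derivative with respect to the second variable `x`. -/
noncomputable def px (f : ℝ × ℝ → ℝ) : ℝ × ℝ → ℝ :=
  fun p => deriv (fun s => f (p.1, s)) p.2

lemma hasDerivAt_px {f : ℝ × ℝ → ℝ} (hf : Differentiable ℝ f) (p : ℝ × ℝ) :
    HasDerivAt (fun s => f (p.1, s)) (fderiv ℝ f p (0, 1)) p.2 := by
  have h1 : HasDerivAt (fun s : ℝ => ((p.1, s) : ℝ × ℝ)) ((0:ℝ), (1:ℝ)) p.2 :=
    (hasDerivAt_const _ _).prodMk (hasDerivAt_id _)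
  exact (hf p).hasFDerivAt.comp_hasDerivAt p.2 h1

lemma hasDerivAt_pt {f : ℝ × ℝ → ℝ} (hf : Differentiable ℝ f) (p : ℝ × ℝ) :
    HasDerivAt (fun s => f (s, p.2)) (fderiv ℝ f p (1, 0)) p.1 := by
  have h1 : HasDerivAt (fun s : ℝ => ((s, p.2) : ℝ × ℝ)) ((1:ℝ), (0:ℝ)) p.1 :=
    (hasDerivAt_id _).prodMk (hasDerivAt_const _ _)
  exact (hf p).hasFDerivAt.comp_hasDerivAt p.1 h1

lemma px_eq {f : ℝ × ℝ → ℝ} (hf : Differentiable ℝ f) (p : ℝ × ℝ) :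
    px f p = fderiv ℝ f p (0, 1) := (hasDerivAt_px hf p).deriv

lemma pt_eq {f : ℝ × ℝ → ℝ} (hf : Differentiable ℝ f) (p : ℝ × ℝ) :
    pt f p = fderiv ℝ f p (1, 0) := (hasDerivAt_pt hf p).deriv

lemma sliceX {f : ℝ × ℝ → ℝ} (hf : Differentiable ℝ f) (p : ℝ × ℝ) :
    HasDerivAt (fun s => f (p.1, s)) (px f p) p.2 := by
  rw [px_eq hf p]; exact hasDerivAt_px hf p

lemma sliceT {f : ℝ × ℝ → ℝ} (hf : Differentiable ℝ f) (p : ℝ × ℝ) :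
    HasDerivAt (fun s => f (s, p.2)) (pt f p) p.1 := by
  rw [pt_eq hf p]; exact hasDerivAt_pt hf p

lemma contDiff_px {f : ℝ × ℝ → ℝ} (hf : ContDiff ℝ (⊤ : ℕ∞) f) : ContDiff ℝ (⊤ : ℕ∞) (px f) := by
  have : px f = fun p => fderiv ℝ f p (0, 1) :=
    funext (px_eq (hf.differentiable (by simp)))
  rw [this]
  exact (hf.fderiv_right (by simp)).clm_apply contDiff_const

lemma contDiff_pt {f : ℝ × ℝ → ℝ} (hf : ContDiff ℝ (⊤ : ℕ∞) f) : ContDiff ℝ (⊤ : ℕ∞) (pt f) := by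
  have : pt f = fun p => fderiv ℝ f p (1, 0) :=
    funext (pt_eq (hf.differentiable (by simp)))
  rw [this]
  exact (hf.fderiv_right (by simp)).clm_apply contDiff_const

lemma clairaut {f : ℝ × ℝ → ℝ} (hf : ContDiff ℝ (⊤ : ℕ∞) f) (p : ℝ × ℝ) :
    pt (px f) p = px (pt f) p := by
  have hd : Differentiable ℝ f := hf.differentiable (by simp)
  have hF' : ContDiff ℝ (⊤ : ℕ∞) (fderiv ℝ f) := hf.fderiv_right (by simp)
  have hF'd : Differentiable ℝ (fderiv ℝ f) := hF'.differentiable (by simp)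
  have hpx : px f = fun q => fderiv ℝ f q (0, 1) := funext (px_eq hd)
  have hptf : pt f = fun q => fderiv ℝ f q (1, 0) := funext (pt_eq hd)
  have hdiff : ∀ v : ℝ × ℝ, Differentiable ℝ (fun q => fderiv ℝ f q v) :=
    fun v q => ((hF'd q).clm_apply (differentiableAt_const v))
  have e1 : pt (px f) p = fderiv ℝ (fun q => fderiv ℝ f q (0,1)) p (1, 0) := by
    rw [hpx, pt_eq (hdiff _)]
  have e2 : px (pt f) p = fderiv ℝ (fun q => fderiv ℝ f q (1,0)) p (0, 1) := by
    rw [hptf, px_eq (hdiff _)]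
  have e3 : ∀ v u : ℝ × ℝ, fderiv ℝ (fun q => fderiv ℝ f q v) p u
      = fderiv ℝ (fderiv ℝ f) p u v := by
    intro v u
    rw [fderiv_clm_apply (hF'd p) (differentiableAt_const v)]
    simp
  rw [e1, e2, e3, e3]
  exact second_derivative_symmetric (fun y => (hd y).hasFDerivAt)
    (hF'd p).hasFDerivAt _ _

/-- If `w` is smooth, nonvanishing, and `u = 2 w_x / w` solves the Burgers equation,
then `w_t + w_xx = λ(t) w` for some function `λ` of `t` alone. -/
theorem stmt2 (w : ℝ × ℝ → ℝ) (hw : ContDiff ℝ (⊤ : ℕ∞) w)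
    (hwne : ∀ p : ℝ × ℝ, w p ≠ 0)
    (hburgers : ∀ p : ℝ × ℝ,
      pt (fun q => 2 * px w q / w q) p
        + (2 * px w p / w p) * px (fun q => 2 * px w q / w q) p
        + px (px (fun q => 2 * px w q / w q)) p = 0) :
    ∃ lam : ℝ → ℝ, ∀ p : ℝ × ℝ, pt w p + px (px w) p = lam p.1 * w p := by
  have hwd : Differentiable ℝ w := hw.differentiable (by simp)
  have ha : ContDiff ℝ (⊤ : ℕ∞) (px w) := contDiff_px hw
  have had : Differentiable ℝ (px w) := ha.differentiable (by simp)
  have hb : ContDiff ℝ (⊤ : ℕ∞) (px (px w)) := contDiff_px ha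
  have hbd : Differentiable ℝ (px (px w)) := hb.differentiable (by simp)
  have hT : ContDiff ℝ (⊤ : ℕ∞) (pt w) := contDiff_pt hw
  have hTd : Differentiable ℝ (pt w) := hT.differentiable (by simp)
  -- Step 1 : x-derivative of u
  have hux : ∀ p : ℝ × ℝ, px (fun q => 2 * px w q / w q) p
      = (2 * px (px w) p * w p - 2 * px w p * px w p) / w p ^ 2 := by
    intro p
    exact (((sliceX had p).const_mul 2).div (sliceX hwd p) (hwne p)).deriv
  -- Step 3 : t-derivative of u
  have hut : ∀ p : ℝ × ℝ, pt (fun q => 2 * px w q / w q) p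
      = (2 * pt (px w) p * w p - 2 * px w p * pt w p) / w p ^ 2 := by
    intro p
    exact (((sliceT had p).const_mul 2).div (sliceT hwd p) (hwne p)).deriv
  -- define g
  set g : ℝ × ℝ → ℝ := fun q => (pt w q + px (px w) q) / w q with hgdef
  have hg : ContDiff ℝ (⊤ : ℕ∞) g := (hT.add hb).div hw hwne
  -- Step 5 : px g = 0
  have hgzero : ∀ p : ℝ × ℝ, px g p = 0 := by
    intro p
    have key := hburgers p
    rw [hux p, hut p] at key
    -- second x-derivative of u
    have hVfun : px (fun q => 2 * px w q / w q)
        = fun q => (2 * px (px w) q * w q - 2 * px w q * px w q) / w q ^ 2 :=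
      funext hux
    have h2 : px (fun q => (2 * px (px w) q * w q - 2 * px w q * px w q) / w q ^ 2) p = _ :=
      (((((sliceX hbd p).const_mul 2).mul (sliceX hwd p)).sub
        (((sliceX had p).const_mul 2).mul (sliceX had p))).div
        ((sliceX hwd p).pow 2) (pow_ne_zero 2 (hwne p))).deriv
    simp only [Pi.pow_apply, Pi.mul_apply, Pi.sub_apply, Nat.cast_ofNat, Prod.mk.eta, Nat.reduceSub, pow_one] at h2
    rw [hVfun, h2] at key
    have hgx : px g p = ((px (pt w) p + px (px (px w)) p) * w p
        - (pt w p + px (px w) p) * px w p) / w p ^ 2 :=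
      (((sliceX hTd p).add (sliceX hbd p)).div (sliceX hwd p) (hwne p)).deriv
    have hcl := clairaut hw p
    rw [hcl] at key
    have hne := hwne p
    field_simp at key
    have h7 : (2 : ℝ) * w p ^ 7 ≠ 0 := by
      have := pow_ne_zero 7 hne
      positivity
    have key2 : (px (pt w) p + px (px (px w)) p) * w p
        - (pt w p + px (px w) p) * px w p = 0 := by
      apply mul_left_cancel₀ h7
      rw [mul_zero]
      linear_combination w p ^ 6 * key
    rw [hgx, key2, zero_div]
  -- Step 6 : constancy in x
  have hgconst : ∀ t x : ℝ, g (t, x) = g (t, 0) := by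
    intro t x
    have hin : Differentiable ℝ (fun s : ℝ => ((t, s) : ℝ × ℝ)) :=
      (differentiable_const _).prodMk differentiable_id
    have hdiff : Differentiable ℝ (fun s => g (t, s)) :=
      (hg.differentiable (by simp)).comp hin
    exact is_const_of_deriv_eq_zero hdiff (fun s => hgzero (t, s)) x 0
  refine ⟨fun t => g (t, 0), fun p => ?_⟩
  have hgp : g p = g (p.1, 0) := hgconst p.1 p.2
  show pt w p + px (px w) p = g (p.1, 0) * w p
  rw [← hgp]
  exact (div_mul_cancel₀ _ (hwne p)).symm
end

section
/- Let α, β, γ, δ, κ, μ0, μ1 be real constants with αδ − βγ = κ² and κ ≠ 0, and let u be a smooth solution of the Burgers equation u_t + u·u_x + u_xx = 0 on the open set {(t,x) : γt + δ ≠ 0}. Define w on the open set {(s,y) : α − γs ≠ 0} by w(s,y) := ( κ(γt+δ)·u(t,x) − κγx + μ1δ − μ0γ ) / κ², where t := (δs − β)/(α − γs) and x := ( (γt+δ)·y − μ1·t − μ0 ) / κ. Then w is a smooth solution of the Burgers equation w_s + w·w_y + w_yy = 0 on {(s,y) : α − γs ≠ 0}. (This expresses that the complete point symmetry group of the Burgers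 equation consists of the transformations t̃ = (αt+β)/(γt+δ), x̃ = (κx+μ1 t+μ0)/(γt+δ), ũ = (κ(γt+δ)u − κγx + μ1δ − μ0γ)/(αδ−βγ).) -/
lemma pt_eq_fderiv (f : ℝ × ℝ → ℝ) (p : ℝ × ℝ) (hf : DifferentiableAt ℝ f p) :
    pt f p = fderiv ℝ f p (1, 0) := by
  have h : HasDerivAt (fun t => f (t, p.2)) (fderiv ℝ f p (1, 0)) p.1 := by
    have := hf.hasFDerivAt.comp_hasDerivAt p.1
      ((hasDerivAt_id p.1).prodMk (hasDerivAt_const p.1 p.2))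
    exact this
  exact h.deriv

lemma px_eq_fderiv (f : ℝ × ℝ → ℝ) (p : ℝ × ℝ) (hf : DifferentiableAt ℝ f p) :
    px f p = fderiv ℝ f p (0, 1) := by
  have h : HasDerivAt (fun x => f (p.1, x)) (fderiv ℝ f p (0, 1)) p.2 := by
    have := hf.hasFDerivAt.comp_hasDerivAt p.2
      ((hasDerivAt_const p.2 p.1).prodMk (hasDerivAt_id p.2))
    exact this
  exact h.deriv

lemma fderiv_pt_px (f : ℝ × ℝ → ℝ) (p : ℝ × ℝ) (hf : DifferentiableAt ℝ f p) (c₁ c₂ : ℝ) :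
    fderiv ℝ f p (c₁, c₂) = c₁ * pt f p + c₂ * px f p := by
  rw [pt_eq_fderiv f p hf, px_eq_fderiv f p hf]
  have h : ((c₁, c₂) : ℝ × ℝ) = c₁ • ((1 : ℝ), (0 : ℝ)) + c₂ • ((0 : ℝ), (1 : ℝ)) := by
    simp [Prod.ext_iff]
  rw [h, map_add, map_smul, map_smul, smul_eq_mul, smul_eq_mul]


/-- The point transformations
`t̃ = (αt+β)/(γt+δ)`, `x̃ = (κx+μ₁t+μ₀)/(γt+δ)`,
`ũ = (κ(γt+δ)u − κγx + μ₁δ − μ₀γ)/(αδ−βγ)` with `αδ−βγ = κ² > 0`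
are symmetries of the Burgers equation: the transform `w` of any smooth solution `u`
is again a smooth solution on the corresponding domain. -/
theorem stmt3 (α β γ δ κ μ0 μ1 : ℝ) (hκ : κ ≠ 0) (hdet : α * δ - β * γ = κ ^ 2)
    (u : ℝ × ℝ → ℝ)
    (hu : ContDiffOn ℝ (⊤ : ℕ∞) u {p : ℝ × ℝ | γ * p.1 + δ ≠ 0})
    (hburgers : ∀ p : ℝ × ℝ, γ * p.1 + δ ≠ 0 →
      pt u p + u p * px u p + px (px u) p = 0) :
    let T : ℝ → ℝ := fun s => (δ * s - β) / (α - γ * s)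
    let X : ℝ × ℝ → ℝ := fun q => ((γ * T q.1 + δ) * q.2 - μ1 * T q.1 - μ0) / κ
    let w : ℝ × ℝ → ℝ := fun q =>
      (κ * (γ * T q.1 + δ) * u (T q.1, X q) - κ * γ * X q + μ1 * δ - μ0 * γ) / κ ^ 2
    ContDiffOn ℝ (⊤ : ℕ∞) w {q : ℝ × ℝ | α - γ * q.1 ≠ 0} ∧
    ∀ q : ℝ × ℝ, α - γ * q.1 ≠ 0 →
      pt w q + w q * px w q + px (px w) q = 0 := by
  intro T X w
  have hVopen : IsOpen {p : ℝ × ℝ | γ * p.1 + δ ≠ 0} :=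
    isOpen_ne_fun (by fun_prop) continuous_const
  have hAeq : ∀ s : ℝ, α - γ * s ≠ 0 → γ * T s + δ = κ ^ 2 / (α - γ * s) := by
    intro s hs
    show γ * ((δ * s - β) / (α - γ * s)) + δ = κ ^ 2 / (α - γ * s)
    field_simp
    linear_combination hdet
  have hAne : ∀ s : ℝ, α - γ * s ≠ 0 → γ * T s + δ ≠ 0 := by
    intro s hs
    rw [hAeq s hs]
    exact div_ne_zero (pow_ne_zero 2 hκ) hs
  have hdiffu : ∀ p : ℝ × ℝ, γ * p.1 + δ ≠ 0 → DifferentiableAt ℝ u p := fun p hp =>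
    (hu.contDiffAt (hVopen.mem_nhds hp)).differentiableAt (by simp)
  have hpxud : ∀ p : ℝ × ℝ, γ * p.1 + δ ≠ 0 → DifferentiableAt ℝ (px u) p := by
    intro p hp
    have hfd : ContDiffOn ℝ (⊤ : ℕ∞) (fun q => fderiv ℝ u q) {p : ℝ × ℝ | γ * p.1 + δ ≠ 0} :=
      hu.fderiv_of_isOpen hVopen (by simp)
    have hg : ContDiffOn ℝ (⊤ : ℕ∞) (fun q => fderiv ℝ u q ((0 : ℝ), (1 : ℝ)))
        {p : ℝ × ℝ | γ * p.1 + δ ≠ 0} := hfd.clm_apply contDiffOn_const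
    have hgd : DifferentiableAt ℝ (fun q => fderiv ℝ u q ((0 : ℝ), (1 : ℝ))) p :=
      (hg.contDiffAt (hVopen.mem_nhds hp)).differentiableAt (by simp)
    apply hgd.congr_of_eventuallyEq
    filter_upwards [hVopen.mem_nhds hp] with q hq
    exact px_eq_fderiv u q (hdiffu q hq)
  constructor
  · -- smoothness
    have h1 : ContDiffOn ℝ (⊤ : ℕ∞) (fun q : ℝ × ℝ => T q.1) {q : ℝ × ℝ | α - γ * q.1 ≠ 0} := by
      show ContDiffOn ℝ (⊤ : ℕ∞) (fun q : ℝ × ℝ => (δ * q.1 - β) / (α - γ * q.1)) _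
      exact ContDiffOn.div (ContDiff.contDiffOn (by fun_prop))
        (ContDiff.contDiffOn (by fun_prop)) (fun q hq => hq)
    have h2 : ContDiffOn ℝ (⊤ : ℕ∞) X {q : ℝ × ℝ | α - γ * q.1 ≠ 0} := by
      show ContDiffOn ℝ (⊤ : ℕ∞)
        (fun q : ℝ × ℝ => ((γ * T q.1 + δ) * q.2 - μ1 * T q.1 - μ0) / κ) _
      exact ((((contDiffOn_const.mul h1).add contDiffOn_const).mul
        contDiff_snd.contDiffOn).sub (contDiffOn_const.mul h1)).sub contDiffOn_const
        |>.div_const κ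
    have hmaps : Set.MapsTo (fun q : ℝ × ℝ => (T q.1, X q))
        {q : ℝ × ℝ | α - γ * q.1 ≠ 0} {p : ℝ × ℝ | γ * p.1 + δ ≠ 0} :=
      fun q hq => hAne q.1 hq
    have h3 : ContDiffOn ℝ (⊤ : ℕ∞) (fun q : ℝ × ℝ => u (T q.1, X q))
        {q : ℝ × ℝ | α - γ * q.1 ≠ 0} := hu.comp (h1.prodMk h2) hmaps
    exact ((((contDiffOn_const.mul ((contDiffOn_const.mul h1).add contDiffOn_const)).mul
      h3).sub (contDiffOn_const.mul h2)).add contDiffOn_const).sub contDiffOn_const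
      |>.div_const (κ ^ 2)
  · -- the PDE
    rintro ⟨s, y⟩ hq
    have ha : α - γ * s ≠ 0 := hq
    have hA : γ * T s + δ = κ ^ 2 / (α - γ * s) := hAeq s ha
    have hAne' : γ * T s + δ ≠ 0 := hAne s ha
    have hP : γ * (T s, X (s, y)).1 + δ ≠ 0 := hAne'
    -- derivative of T
    have hT' : HasDerivAt T ((γ * T s + δ) ^ 2 / κ ^ 2) s := by
      have hnum : HasDerivAt (fun t : ℝ => δ * t - β) δ s := by
        simpa using ((hasDerivAt_id s).const_mul δ).sub_const β
      have hden : HasDerivAt (fun t : ℝ => α - γ * t) (-γ) s := by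
        simpa using HasDerivAt.const_sub α ((hasDerivAt_id s).const_mul γ)
      have h := hnum.div hden ha
      refine h.congr_deriv ?_
      rw [hA, show (δ * (α - γ * s) - (δ * s - β) * -γ) = κ ^ 2 from by linear_combination hdet]
      field_simp
    -- derivative of X in t
    have hXs : HasDerivAt (fun t => X (t, y))
        ((γ * ((γ * T s + δ) ^ 2 / κ ^ 2) * y - μ1 * ((γ * T s + δ) ^ 2 / κ ^ 2)) / κ) s := by
      exact ((((hT'.const_mul γ).add_const δ).mul_const y).sub
        (hT'.const_mul μ1)).sub_const μ0 |>.div_const κ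
    -- derivative of u along the curve t ↦ (T t, X (t, y))
    have hcs : HasDerivAt (fun t => u (T t, X (t, y)))
        (((γ * T s + δ) ^ 2 / κ ^ 2) * pt u (T s, X (s, y)) +
          ((γ * ((γ * T s + δ) ^ 2 / κ ^ 2) * y - μ1 * ((γ * T s + δ) ^ 2 / κ ^ 2)) / κ) *
            px u (T s, X (s, y))) s := by
      have h := (hdiffu _ hP).hasFDerivAt.comp_hasDerivAt s (hT'.prodMk hXs)
      rw [fderiv_pt_px u _ (hdiffu _ hP)] at h
      exact h
    -- pt w
    have h1 : pt w (s, y) =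
        ((κ * (γ * ((γ * T s + δ) ^ 2 / κ ^ 2))) * u (T s, X (s, y)) +
          (κ * (γ * T s + δ)) *
            (((γ * T s + δ) ^ 2 / κ ^ 2) * pt u (T s, X (s, y)) +
              ((γ * ((γ * T s + δ) ^ 2 / κ ^ 2) * y - μ1 * ((γ * T s + δ) ^ 2 / κ ^ 2)) / κ) *
                px u (T s, X (s, y))) -
          κ * γ * ((γ * ((γ * T s + δ) ^ 2 / κ ^ 2) * y -
            μ1 * ((γ * T s + δ) ^ 2 / κ ^ 2)) / κ)) / κ ^ 2 := by
      have hA' : HasDerivAt (fun t => γ * T t + δ) (γ * ((γ * T s + δ) ^ 2 / κ ^ 2)) s :=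
        (hT'.const_mul γ).add_const δ
      have h := (((hA'.const_mul κ).mul hcs).sub (hXs.const_mul (κ * γ))).add_const
        (μ1 * δ) |>.sub_const (μ0 * γ) |>.div_const (κ ^ 2)
      exact h.deriv
    -- px w at an arbitrary second coordinate
    have key : ∀ y' : ℝ, px w (s, y') =
        (κ * (γ * T s + δ) * (((γ * T s + δ) / κ) * px u (T s, X (s, y'))) -
          κ * γ * ((γ * T s + δ) / κ)) / κ ^ 2 := by
      intro y'
      have hP' : γ * (T s, X (s, y')).1 + δ ≠ 0 := hAne'
      have hXy : HasDerivAt (fun z => X (s, z)) ((γ * T s + δ) / κ) y' := by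
        have h := ((((hasDerivAt_id y').const_mul (γ * T s + δ)).sub_const
          (μ1 * T s)).sub_const μ0).div_const κ
        simpa using h
      have hcy : HasDerivAt (fun z => u (T s, X (s, z)))
          (fderiv ℝ u (T s, X (s, y')) (0, (γ * T s + δ) / κ)) y' :=
        (hdiffu _ hP').hasFDerivAt.comp_hasDerivAt y'
          ((hasDerivAt_const y' (T s)).prodMk hXy)
      have hwy := (((hcy.const_mul (κ * (γ * T s + δ))).sub
        (hXy.const_mul (κ * γ))).add_const (μ1 * δ)).sub_const (μ0 * γ)
        |>.div_const (κ ^ 2)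
      have hd := hwy.deriv
      have : px w (s, y') =
          (κ * (γ * T s + δ) * fderiv ℝ u (T s, X (s, y')) (0, (γ * T s + δ) / κ) -
            κ * γ * ((γ * T s + δ) / κ)) / κ ^ 2 := hd
      rw [this, fderiv_pt_px u _ (hdiffu _ hP')]
      ring
    -- px (px w)
    have hXy0 : HasDerivAt (fun z => X (s, z)) ((γ * T s + δ) / κ) y := by
      have h := ((((hasDerivAt_id y).const_mul (γ * T s + δ)).sub_const
        (μ1 * T s)).sub_const μ0).div_const κ
      simpa using h
    have hcy2 : HasDerivAt (fun z => px u (T s, X (s, z)))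
        (fderiv ℝ (px u) (T s, X (s, y)) (0, (γ * T s + δ) / κ)) y :=
      (hpxud _ hP).hasFDerivAt.comp_hasDerivAt (l := px u) y
        ((hasDerivAt_const y (T s)).prodMk hXy0)
    have h3 : px (px w) (s, y) =
        (κ * (γ * T s + δ) *
          (((γ * T s + δ) / κ) * fderiv ℝ (px u) (T s, X (s, y)) (0, (γ * T s + δ) / κ))) /
          κ ^ 2 := by
      have heq : (fun z => px w ((s, y).1, z)) =
          (fun z => (κ * (γ * T s + δ) * (((γ * T s + δ) / κ) * px u (T s, X (s, z))) -
            κ * γ * ((γ * T s + δ) / κ)) / κ ^ 2) := funext fun z => key z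
      show deriv (fun z => px w ((s, y).1, z)) (s, y).2 = _
      rw [heq]
      have hd := ((((hcy2.const_mul ((γ * T s + δ) / κ)).const_mul
        (κ * (γ * T s + δ))).sub_const (κ * γ * ((γ * T s + δ) / κ))).div_const (κ ^ 2))
      exact hd.deriv
    -- finish
    have hb := hburgers (T s, X (s, y)) hP
    have hptu : pt u (T s, X (s, y)) =
        -(u (T s, X (s, y)) * px u (T s, X (s, y)) + px (px u) (T s, X (s, y))) := by
      linarith
    have hwval : w (s, y) = (κ * (γ * T s + δ) * u (T s, X (s, y)) -
        κ * γ * X (s, y) + μ1 * δ - μ0 * γ) / κ ^ 2 := rfl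
    have hx0 : X (s, y) = ((γ * T s + δ) * y - μ1 * T s - μ0) / κ := rfl
    rw [h1, key y, h3, fderiv_pt_px (px u) _ (hpxud _ hP), hwval, hptu, hx0]
    field_simp
    ring
end

section
/- Let f, g : ℝ³ → ℝ be smooth functions of (t,x,κ) resp. (t,x,u) such that f_κ(t,x,κ) ≠ 0 everywhere, g(t,x,f(t,x,κ)) = κ and f(t,x,g(t,x,u)) = u for all arguments, and suppose that for every fixed κ the function (t,x) ↦ f(t,x,κ) solves the Burgers equation f_t + f·f_x + f_xx = 0. Define η : ℝ³ → ℝ by η(t,x,u) := f_x(t,x,g(t,x,u)). Then η satisfies the determining equation for singular reduction operators of the Burgers equation: η_t + u·η_x + η² + η_xx + 2η·η_xu + η²·η_uu = 0 for all (t,x,u). -/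
/-- Partial derivative with respect to the first variable `t` (of three). -/
noncomputable def p1 (f : ℝ × ℝ × ℝ → ℝ) : ℝ × ℝ × ℝ → ℝ :=
  fun p => deriv (fun s => f (s, p.2.1, p.2.2)) p.1

/-- Partial derivative with respect to the second variable `x` (of three). -/
noncomputable def p2 (f : ℝ × ℝ × ℝ → ℝ) : ℝ × ℝ × ℝ → ℝ :=
  fun p => deriv (fun s => f (p.1, s, p.2.2)) p.2.1

/-- Partial derivative with respect to the third variable `u` (of three). -/
noncomputable def p3 (f : ℝ × ℝ × ℝ → ℝ) : ℝ × ℝ × ℝ → ℝ :=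
  fun p => deriv (fun s => f (p.1, p.2.1, s)) p.2.2

noncomputable def BB (v : ℝ × ℝ × ℝ) (f : ℝ × ℝ × ℝ → ℝ) : ℝ × ℝ × ℝ → ℝ :=
  fun p => fderiv ℝ f p v

lemma BB_contDiff (v : ℝ × ℝ × ℝ) {f : ℝ × ℝ × ℝ → ℝ} (hf : ContDiff ℝ (⊤ : ℕ∞) f) :
    ContDiff ℝ (⊤ : ℕ∞) (BB v f) :=
  (hf.fderiv_right (by simp)).clm_apply contDiff_const

lemma hasDerivAt_comp3 {η : ℝ × ℝ × ℝ → ℝ} (hη : ContDiff ℝ (⊤ : ℕ∞) η)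
    {c : ℝ → ℝ × ℝ × ℝ} {c' : ℝ × ℝ × ℝ} {s : ℝ} (hc : HasDerivAt c c' s) :
    HasDerivAt (fun r => η (c r)) (fderiv ℝ η (c s) c') s :=
  (hη.differentiable (by simp) (c s)).hasFDerivAt.comp_hasDerivAt s hc

lemma hasDerivAt_slice1 {f : ℝ × ℝ × ℝ → ℝ} (hf : ContDiff ℝ (⊤ : ℕ∞) f) (t x u : ℝ) :
    HasDerivAt (fun s => f (s, x, u)) (BB (1,0,0) f (t,x,u)) t :=
  hasDerivAt_comp3 hf (HasDerivAt.prodMk (hasDerivAt_id t) (HasDerivAt.prodMk (hasDerivAt_const t x) (hasDerivAt_const t u)))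

lemma hasDerivAt_slice2 {f : ℝ × ℝ × ℝ → ℝ} (hf : ContDiff ℝ (⊤ : ℕ∞) f) (t x u : ℝ) :
    HasDerivAt (fun s => f (t, s, u)) (BB (0,1,0) f (t,x,u)) x :=
  hasDerivAt_comp3 hf (HasDerivAt.prodMk (hasDerivAt_const x t) (HasDerivAt.prodMk (hasDerivAt_id x) (hasDerivAt_const x u)))

lemma hasDerivAt_slice3 {f : ℝ × ℝ × ℝ → ℝ} (hf : ContDiff ℝ (⊤ : ℕ∞) f) (t x u : ℝ) :
    HasDerivAt (fun s => f (t, x, s)) (BB (0,0,1) f (t,x,u)) u :=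
  hasDerivAt_comp3 hf (HasDerivAt.prodMk (hasDerivAt_const u t) (HasDerivAt.prodMk (hasDerivAt_const u x) (hasDerivAt_id u)))

lemma p1_eq_BB {f : ℝ × ℝ × ℝ → ℝ} (hf : ContDiff ℝ (⊤ : ℕ∞) f) : p1 f = BB (1,0,0) f :=
  funext fun p => (hasDerivAt_slice1 hf p.1 p.2.1 p.2.2).deriv

lemma p2_eq_BB {f : ℝ × ℝ × ℝ → ℝ} (hf : ContDiff ℝ (⊤ : ℕ∞) f) : p2 f = BB (0,1,0) f :=
  funext fun p => (hasDerivAt_slice2 hf p.1 p.2.1 p.2.2).deriv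

lemma p3_eq_BB {f : ℝ × ℝ × ℝ → ℝ} (hf : ContDiff ℝ (⊤ : ℕ∞) f) : p3 f = BB (0,0,1) f :=
  funext fun p => (hasDerivAt_slice3 hf p.1 p.2.1 p.2.2).deriv

lemma fderiv_expand (η : ℝ × ℝ × ℝ → ℝ) (P : ℝ × ℝ × ℝ) (a b c : ℝ) :
    fderiv ℝ η P (a,b,c) = a * BB (1,0,0) η P + b * BB (0,1,0) η P + c * BB (0,0,1) η P := by
  have h : ((a,b,c) : ℝ × ℝ × ℝ)
      = a • ((1:ℝ),(0:ℝ),(0:ℝ)) + b • ((0:ℝ),(1:ℝ),(0:ℝ)) + c • ((0:ℝ),(0:ℝ),(1:ℝ)) := by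
    simp [Prod.ext_iff]
  rw [h, map_add, map_add, map_smul, map_smul, map_smul]
  simp [BB, smul_eq_mul]

lemma BB_symm {f : ℝ × ℝ × ℝ → ℝ} (hf : ContDiff ℝ (⊤ : ℕ∞) f) (v w : ℝ × ℝ × ℝ) (p : ℝ × ℝ × ℝ) :
    BB v (BB w f) p = BB w (BB v f) p := by
  have hd : ∀ q, HasFDerivAt f (fderiv ℝ f q) q := fun q => (hf.differentiable (by simp) q).hasFDerivAt
  have h2 : HasFDerivAt (fderiv ℝ f) (fderiv ℝ (fderiv ℝ f) p) p :=
    ((hf.fderiv_right (m := (⊤ : ℕ∞)) (by simp)).differentiable (by simp) p).hasFDerivAt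
  have key : ∀ a b : ℝ × ℝ × ℝ, BB a (BB b f) p = fderiv ℝ (fderiv ℝ f) p a b := by
    intro a b
    have hdiff : DifferentiableAt ℝ (fderiv ℝ f) p :=
      (hf.fderiv_right (m := (⊤ : ℕ∞)) (by simp)).differentiable (by simp) p
    have he : fderiv ℝ (fun q => (fderiv ℝ f q) b) p = (fderiv ℝ (fderiv ℝ f) p).flip b := by
      rw [fderiv_clm_apply hdiff (differentiableAt_const b)]
      simp
    show fderiv ℝ (fun q => (fderiv ℝ f q) b) p a = _
    rw [he]; rfl
  rw [key, key, second_derivative_symmetric hd h2 w v]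


/-- A one-parameter family `u = f(t,x,κ)` of solutions of the Burgers equation, with
inverse `κ = g(t,x,u)`, yields a solution `η(t,x,u) = f_x(t,x,g(t,x,u))` of the
determining equation for singular reduction operators of the Burgers equation. -/
theorem stmt4 (f g : ℝ × ℝ × ℝ → ℝ) (hf : ContDiff ℝ (⊤ : ℕ∞) f) (hg : ContDiff ℝ (⊤ : ℕ∞) g)
    (hfκ : ∀ p : ℝ × ℝ × ℝ, p3 f p ≠ 0)
    (hgf : ∀ t x κ : ℝ, g (t, x, f (t, x, κ)) = κ)
    (hfg : ∀ t x u : ℝ, f (t, x, g (t, x, u)) = u)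
    (hburgers : ∀ κ : ℝ, ∀ p : ℝ × ℝ,
      pt (fun q : ℝ × ℝ => f (q.1, q.2, κ)) p
        + f (p.1, p.2, κ) * px (fun q : ℝ × ℝ => f (q.1, q.2, κ)) p
        + px (px (fun q : ℝ × ℝ => f (q.1, q.2, κ))) p = 0) :
    let η : ℝ × ℝ × ℝ → ℝ := fun p => p2 f (p.1, p.2.1, g p)
    ∀ p : ℝ × ℝ × ℝ,
      p1 η p + p.2.2 * p2 η p + (η p) ^ 2 + p2 (p2 η) p
        + 2 * η p * p3 (p2 η) p + (η p) ^ 2 * p3 (p3 η) p = 0 := by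
  intro η
  have hp1f : p1 f = BB (1,0,0) f := p1_eq_BB hf
  have hp2f : p2 f = BB (0,1,0) f := p2_eq_BB hf
  have hηdef : η = fun p : ℝ × ℝ × ℝ => BB (0,1,0) f (p.1, p.2.1, g p) := by
    funext q
    show p2 f (q.1, q.2.1, g q) = _
    rw [hp2f]
  have hη : ContDiff ℝ (⊤ : ℕ∞) η := by
    rw [hηdef]
    exact (BB_contDiff _ hf).comp
      (ContDiff.prodMk contDiff_fst (ContDiff.prodMk (contDiff_fst.comp contDiff_snd) hg))
  intro p
  obtain ⟨t, x, u⟩ := p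
  set κ := g (t, x, u) with hκ
  have hu : f (t, x, κ) = u := hfg t x u
  -- Burgers equation in BB form along the line (t, ·, κ)
  have hBur : ∀ s : ℝ, BB (1,0,0) f (t, s, κ) + f (t, s, κ) * BB (0,1,0) f (t, s, κ)
      + BB (0,1,0) (BB (0,1,0) f) (t, s, κ) = 0 := by
    intro s
    have h := hburgers κ (t, s)
    have e1 : pt (fun q : ℝ × ℝ => f (q.1, q.2, κ)) (t, s) = p1 f (t, s, κ) := rfl
    have e2 : px (fun q : ℝ × ℝ => f (q.1, q.2, κ)) (t, s) = p2 f (t, s, κ) := rfl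
    have e3 : px (px (fun q : ℝ × ℝ => f (q.1, q.2, κ))) (t, s) = p2 (p2 f) (t, s, κ) := rfl
    have hp22 : p2 (p2 f) = BB (0,1,0) (BB (0,1,0) f) := by
      rw [hp2f]; exact p2_eq_BB (BB_contDiff _ hf)
    rw [e1, e2, e3, hp22, hp1f, hp2f] at h
    exact h
  -- key identity: η along the solution family equals f_x
  have hI1 : ∀ a b : ℝ, η (a, b, f (a, b, κ)) = BB (0,1,0) f (a, b, κ) := by
    intro a b
    rw [hηdef]
    show BB (0,1,0) f (a, b, g (a, b, f (a, b, κ))) = _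
    rw [hgf]
  -- the curve s ↦ (t, s, f(t,s,κ))
  have hQ : ∀ s : ℝ, HasDerivAt (fun r : ℝ => ((t, r, f (t, r, κ)) : ℝ × ℝ × ℝ))
      ((0, 1, BB (0,1,0) f (t, s, κ)) : ℝ × ℝ × ℝ) s := fun s =>
    HasDerivAt.prodMk (hasDerivAt_const s t) (HasDerivAt.prodMk (hasDerivAt_id s) (hasDerivAt_slice2 hf t s κ))
  -- (*1): differentiate hI1 in x, at every s
  have hstar1 : ∀ s : ℝ,
      BB (0,1,0) η (t, s, f (t, s, κ))
        + BB (0,1,0) f (t, s, κ) * BB (0,0,1) η (t, s, f (t, s, κ))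
        = BB (0,1,0) (BB (0,1,0) f) (t, s, κ) := by
    intro s
    have hL := hasDerivAt_comp3 hη (hQ s)
    have hL' : HasDerivAt (fun r : ℝ => BB (0,1,0) f (t, r, κ))
        (fderiv ℝ η (t, s, f (t, s, κ)) ((0, 1, BB (0,1,0) f (t, s, κ)) : ℝ × ℝ × ℝ)) s :=
      hL.congr_of_eventuallyEq (Filter.Eventually.of_forall fun r => (hI1 t r).symm)
    have h := hL'.unique (hasDerivAt_slice2 (BB_contDiff (0,1,0) hf) t s κ)
    rw [fderiv_expand] at h
    linear_combination h
  -- (*2): differentiate hI1 in t, at the point t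
  have hQ2 : HasDerivAt (fun r : ℝ => ((r, x, f (r, x, κ)) : ℝ × ℝ × ℝ))
      ((1, 0, BB (1,0,0) f (t, x, κ)) : ℝ × ℝ × ℝ) t :=
    HasDerivAt.prodMk (hasDerivAt_id t) (HasDerivAt.prodMk (hasDerivAt_const t x) (hasDerivAt_slice1 hf t x κ))
  have hstar2 : BB (1,0,0) η (t, x, f (t, x, κ))
      + BB (1,0,0) f (t, x, κ) * BB (0,0,1) η (t, x, f (t, x, κ))
      = BB (1,0,0) (BB (0,1,0) f) (t, x, κ) := by
    have hL := hasDerivAt_comp3 hη hQ2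
    have hL' : HasDerivAt (fun r : ℝ => BB (0,1,0) f (r, x, κ))
        (fderiv ℝ η (t, x, f (t, x, κ)) ((1, 0, BB (1,0,0) f (t, x, κ)) : ℝ × ℝ × ℝ)) t :=
      hL.congr_of_eventuallyEq (Filter.Eventually.of_forall fun r => (hI1 r x).symm)
    have h := hL'.unique (hasDerivAt_slice1 (BB_contDiff (0,1,0) hf) t x κ)
    rw [fderiv_expand] at h
    linear_combination h
  -- (*3): differentiate hstar1 in x at the point x
  have hstar3 :
      (BB (0,1,0) (BB (0,1,0) η) (t, x, f (t, x, κ))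
        + BB (0,1,0) f (t, x, κ) * BB (0,0,1) (BB (0,1,0) η) (t, x, f (t, x, κ)))
      + (BB (0,1,0) (BB (0,1,0) f) (t, x, κ) * BB (0,0,1) η (t, x, f (t, x, κ))
        + BB (0,1,0) f (t, x, κ) * (BB (0,1,0) (BB (0,0,1) η) (t, x, f (t, x, κ))
          + BB (0,1,0) f (t, x, κ) * BB (0,0,1) (BB (0,0,1) η) (t, x, f (t, x, κ))))
      = BB (0,1,0) (BB (0,1,0) (BB (0,1,0) f)) (t, x, κ) := by
    have h1 := hasDerivAt_comp3 (BB_contDiff (0,1,0) hη) (hQ x)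
    have h2a := hasDerivAt_slice2 (BB_contDiff (0,1,0) hf) t x κ
    have h2b := hasDerivAt_comp3 (BB_contDiff (0,0,1) hη) (hQ x)
    have hL := h1.add (h2a.mul h2b)
    have hL' : HasDerivAt (fun s : ℝ => BB (0,1,0) (BB (0,1,0) f) (t, s, κ))
        (fderiv ℝ (BB (0,1,0) η) (t, x, f (t, x, κ)) ((0, 1, BB (0,1,0) f (t, x, κ)) : ℝ × ℝ × ℝ)
          + (BB (0,1,0) (BB (0,1,0) f) (t, x, κ) * BB (0,0,1) η (t, x, f (t, x, κ))
            + BB (0,1,0) f (t, x, κ) *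
              fderiv ℝ (BB (0,0,1) η) (t, x, f (t, x, κ))
                ((0, 1, BB (0,1,0) f (t, x, κ)) : ℝ × ℝ × ℝ))) x :=
      hL.congr_of_eventuallyEq (Filter.Eventually.of_forall fun s => (hstar1 s).symm)
    have h := hL'.unique (hasDerivAt_slice2 (BB_contDiff (0,1,0) (BB_contDiff (0,1,0) hf)) t x κ)
    rw [fderiv_expand, fderiv_expand] at h
    linear_combination h
  -- differentiate Burgers in x at the point x
  have hBurx : BB (0,1,0) (BB (1,0,0) f) (t, x, κ)
      + (BB (0,1,0) f (t, x, κ) * BB (0,1,0) f (t, x, κ)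
        + f (t, x, κ) * BB (0,1,0) (BB (0,1,0) f) (t, x, κ))
      + BB (0,1,0) (BB (0,1,0) (BB (0,1,0) f)) (t, x, κ) = 0 := by
    have h1 := hasDerivAt_slice2 (BB_contDiff (1,0,0) hf) t x κ
    have h2a := hasDerivAt_slice2 hf t x κ
    have h2b := hasDerivAt_slice2 (BB_contDiff (0,1,0) hf) t x κ
    have h3 := hasDerivAt_slice2 (BB_contDiff (0,1,0) (BB_contDiff (0,1,0) hf)) t x κ
    have hL := (h1.add (h2a.mul h2b)).add h3
    have hL' : HasDerivAt (fun _ : ℝ => (0:ℝ))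
        ((BB (0,1,0) (BB (1,0,0) f) (t, x, κ)
          + (BB (0,1,0) f (t, x, κ) * BB (0,1,0) f (t, x, κ)
            + f (t, x, κ) * BB (0,1,0) (BB (0,1,0) f) (t, x, κ)))
          + BB (0,1,0) (BB (0,1,0) (BB (0,1,0) f)) (t, x, κ)) x :=
      hL.congr_of_eventuallyEq (Filter.Eventually.of_forall fun s => (hBur s).symm)
    have h := hL'.unique (hasDerivAt_const x (0:ℝ))
    linear_combination h
  -- symmetry of second derivatives
  have hsymf : BB (0,1,0) (BB (1,0,0) f) (t, x, κ) = BB (1,0,0) (BB (0,1,0) f) (t, x, κ) :=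
    BB_symm hf _ _ _
  have hsymη : BB (0,1,0) (BB (0,0,1) η) (t, x, u) = BB (0,0,1) (BB (0,1,0) η) (t, x, u) :=
    BB_symm hη _ _ _
  -- assemble
  have E1 := hstar1 x
  have E2 := hstar2
  have E3 := hstar3
  have E4 := hBur x
  have E5 := hBurx
  rw [hu] at E1 E2 E3 E4 E5
  have hηu : η (t, x, u) = BB (0,1,0) f (t, x, κ) := by rw [hηdef]
  show p1 η (t, x, u) + u * p2 η (t, x, u) + (η (t, x, u)) ^ 2 + p2 (p2 η) (t, x, u)
    + 2 * η (t, x, u) * p3 (p2 η) (t, x, u) + (η (t, x, u)) ^ 2 * p3 (p3 η) (t, x, u) = 0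
  rw [p1_eq_BB hη, p2_eq_BB hη, p3_eq_BB hη, p2_eq_BB (BB_contDiff (0,1,0) hη),
    p3_eq_BB (BB_contDiff (0,1,0) hη), p3_eq_BB (BB_contDiff (0,0,1) hη), hηu]
  linear_combination E2 + u * E1 + E3 - BB (0,1,0) f (t, x, κ) * hsymη
    - BB (0,0,1) η (t, x, u) * E4 + E5 - hsymf
end

section
/- Let v : ℝ × ℝ → ℝ be smooth with v(t,x) ≠ 0 for all (t,x), let u := 2 v_x / v, and let c0, c1, c2, c3, c4 be real constants. Define Q[u] := (−c1·u + c2·(x − t·u) + c4) − (c0 + 2c1·t + c2·t²)·u_t − (c1·x + c2·t·x + c3 + c4·t)·u_x and Q̂[v] := (c2·(x²/4 − t/2) + c4·x/2)·v − (c0 + 2c1·t + c2·t²)·v_t − (c1·x + c2·t·x + c3 + c4·t)·v_x. Then Q[u] = 2 ∂_x( Q̂[v] / v ) at every point (t,x). -/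
private noncomputable def Wv (v : ℝ × ℝ → ℝ) : ℝ × ℝ → ℝ :=
  fun q => fderiv ℝ v q (0, 1)

private noncomputable def Tv (v : ℝ × ℝ → ℝ) : ℝ × ℝ → ℝ :=
  fun q => fderiv ℝ v q (1, 0)

private lemma sliceT_s5 (f : ℝ × ℝ → ℝ) (a b : ℝ) (hf : DifferentiableAt ℝ f (a, b)) :
    HasDerivAt (fun s => f (s, b)) (fderiv ℝ f (a, b) (1, 0)) a := by
  have h : HasDerivAt (fun s : ℝ => ((s, b) : ℝ × ℝ)) ((1 : ℝ), (0 : ℝ)) a :=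
    (hasDerivAt_id a).prodMk (hasDerivAt_const a b)
  exact hf.hasFDerivAt.comp_hasDerivAt a h

private lemma sliceX_s5 (f : ℝ × ℝ → ℝ) (a b : ℝ) (hf : DifferentiableAt ℝ f (a, b)) :
    HasDerivAt (fun s => f (a, s)) (fderiv ℝ f (a, b) (0, 1)) b := by
  have h : HasDerivAt (fun s : ℝ => ((a, s) : ℝ × ℝ)) ((0 : ℝ), (1 : ℝ)) b :=
    (hasDerivAt_const b a).prodMk (hasDerivAt_id b)
  exact hf.hasFDerivAt.comp_hasDerivAt b h

private lemma Wv_smooth {v : ℝ × ℝ → ℝ} (hv : ContDiff ℝ (⊤ : ℕ∞) v) : ContDiff ℝ (⊤ : ℕ∞) (Wv v) :=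
  (hv.fderiv_right (by simp)).clm_apply contDiff_const

private lemma Tv_smooth {v : ℝ × ℝ → ℝ} (hv : ContDiff ℝ (⊤ : ℕ∞) v) : ContDiff ℝ (⊤ : ℕ∞) (Tv v) :=
  (hv.fderiv_right (by simp)).clm_apply contDiff_const

private lemma px_eq_s5 {v : ℝ × ℝ → ℝ} (hv : ContDiff ℝ (⊤ : ℕ∞) v) (q : ℝ × ℝ) :
    px v q = Wv v q :=
  (sliceX_s5 v q.1 q.2 ((hv.differentiable (by simp)) _)).deriv

private lemma pt_eq_s5 {v : ℝ × ℝ → ℝ} (hv : ContDiff ℝ (⊤ : ℕ∞) v) (q : ℝ × ℝ) :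
    pt v q = Tv v q :=
  (sliceT_s5 v q.1 q.2 ((hv.differentiable (by simp)) _)).deriv

private lemma clairaut_s5 {v : ℝ × ℝ → ℝ} (hv : ContDiff ℝ (⊤ : ℕ∞) v) (p : ℝ × ℝ) :
    fderiv ℝ (Wv v) p (1, 0) = fderiv ℝ (Tv v) p (0, 1) := by
  have hvd : Differentiable ℝ v := hv.differentiable (by simp)
  have hφd : Differentiable ℝ (fderiv ℝ v) :=
    (hv.fderiv_right (m := (⊤ : ℕ∞)) (by simp)).differentiable (by simp)
  have key : ∀ w : ℝ × ℝ, fderiv ℝ (fun q => fderiv ℝ v q w) p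
      = (ContinuousLinearMap.apply ℝ ℝ w).comp (fderiv ℝ (fderiv ℝ v) p) := fun w =>
    ((ContinuousLinearMap.apply ℝ ℝ w).hasFDerivAt.comp _ (hφd p).hasFDerivAt).fderiv
  show fderiv ℝ (fun q => fderiv ℝ v q (0, 1)) p (1, 0)
      = fderiv ℝ (fun q => fderiv ℝ v q (1, 0)) p (0, 1)
  rw [key, key]
  simp only [ContinuousLinearMap.comp_apply, ContinuousLinearMap.apply_apply]
  exact (second_derivative_symmetric (fun y => (hvd y).hasFDerivAt)
    (hφd p).hasFDerivAt (0, 1) (1, 0)).symm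

/-- For a nonvanishing smooth `v` and `u = 2 v_x / v`, the characteristic of a Lie
symmetry vector field `Q` of the Burgers equation applied to `u` equals
`2 ∂_x (Q̂[v]/v)`, where `Q̂` is the associated Lie symmetry of the heat equation. -/
theorem stmt5 (v : ℝ × ℝ → ℝ) (hv : ContDiff ℝ (⊤ : ℕ∞) v)
    (hvne : ∀ p : ℝ × ℝ, v p ≠ 0) (c0 c1 c2 c3 c4 : ℝ) :
    let u : ℝ × ℝ → ℝ := fun p => 2 * px v p / v p
    let Qu : ℝ × ℝ → ℝ := fun p =>
      (-c1 * u p + c2 * (p.2 - p.1 * u p) + c4)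
        - (c0 + 2 * c1 * p.1 + c2 * p.1 ^ 2) * pt u p
        - (c1 * p.2 + c2 * p.1 * p.2 + c3 + c4 * p.1) * px u p
    let Qhv : ℝ × ℝ → ℝ := fun p =>
      (c2 * (p.2 ^ 2 / 4 - p.1 / 2) + c4 * p.2 / 2) * v p
        - (c0 + 2 * c1 * p.1 + c2 * p.1 ^ 2) * pt v p
        - (c1 * p.2 + c2 * p.1 * p.2 + c3 + c4 * p.1) * px v p
    ∀ p : ℝ × ℝ, Qu p = 2 * px (fun q => Qhv q / v q) p := by
  intro u Qu Qhv p
  obtain ⟨t, x⟩ := p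
  have hvd : Differentiable ℝ v := hv.differentiable (by simp)
  have hWd : Differentiable ℝ (Wv v) := (Wv_smooth hv).differentiable (by simp)
  have hTd : Differentiable ℝ (Tv v) := (Tv_smooth hv).differentiable (by simp)
  simp only [Qu, Qhv, u, px_eq_s5 hv, pt_eq_s5 hv]
  have h1 : pt (fun p : ℝ × ℝ => 2 * Wv v p / v p) (t, x) = _ :=
    (((sliceT_s5 (Wv v) t x (hWd _)).const_mul (2 : ℝ)).div
      (sliceT_s5 v t x (hvd _)) (hvne _)).deriv
  have h2 : px (fun p : ℝ × ℝ => 2 * Wv v p / v p) (t, x) = _ :=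
    (((sliceX_s5 (Wv v) t x (hWd _)).const_mul (2 : ℝ)).div
      (sliceX_s5 v t x (hvd _)) (hvne _)).deriv
  have hA : HasDerivAt (fun s : ℝ => c2 * (s ^ 2 / 4 - t / 2) + c4 * s / 2)
      (c2 * ((2 : ℕ) * x ^ (2 - 1) / 4) + c4 * 1 / 2) x :=
    ((((hasDerivAt_pow 2 x).div_const 4).sub_const (t / 2)).const_mul c2).add
      (((hasDerivAt_id x).const_mul c4).div_const 2)
  have hC : HasDerivAt (fun s : ℝ => c1 * s + c2 * t * s + c3 + c4 * t)
      (c1 * 1 + c2 * t * 1) x :=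
    ((((hasDerivAt_id x).const_mul c1).add
      ((hasDerivAt_id x).const_mul (c2 * t))).add_const c3).add_const (c4 * t)
  have h3 : px (fun q : ℝ × ℝ =>
      ((c2 * (q.2 ^ 2 / 4 - q.1 / 2) + c4 * q.2 / 2) * v q
        - (c0 + 2 * c1 * q.1 + c2 * q.1 ^ 2) * Tv v q
        - (c1 * q.2 + c2 * q.1 * q.2 + c3 + c4 * q.1) * Wv v q) / v q) (t, x) = _ :=
    ((((hA.mul (sliceX_s5 v t x (hvd _))).sub
        ((sliceX_s5 (Tv v) t x (hTd _)).const_mul (c0 + 2 * c1 * t + c2 * t ^ 2))).sub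
      (hC.mul (sliceX_s5 (Wv v) t x (hWd _)))).div
      (sliceX_s5 v t x (hvd _)) (hvne _)).deriv
  rw [h1, h2, h3, ← clairaut_s5 hv (t, x)]
  have hV := hvne (t, x)
  simp only [Wv, Tv, Pi.mul_apply, Pi.sub_apply]
  field_simp
  ring
end

section
/- Let u¹, u², u³ : ℝ × ℝ → ℝ be smooth solutions of the Burgers equation u_t + u·u_x + u_xx = 0. Define the column triples ē = (1,1,1), ū = (u¹,u²,u³), ȳ with components yⁱ = 2uⁱ_x + (uⁱ)², and z̄ with components zⁱ = 4uⁱ_xx + 6uⁱ·uⁱ_x + (uⁱ)³, and suppose det[ē, ū, ȳ] ≠ 0 at every point (t,x). Define ξ⁰ := (1/2)·det[ē, ū, z̄]/det[ē, ū, ȳ], η¹ := (1/4)·det[ē, ȳ, z̄]/det[ē, ū, ȳ], and η⁰ := −(1/4)·det[ū, ȳ, z̄]/det[ē, ū, ȳ]. Then (ξ⁰, η¹, η⁰) satisfies the determining system ξ⁰_t + 2ξ⁰·ξ⁰_x + ξ⁰_xx − 2η¹_x = 0, η¹_t + 2ξ⁰_x·η¹ + η¹_xx + η⁰_x = 0,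 and η⁰_t + 2ξ⁰_x·η⁰ + η⁰_xx = 0 at every point. -/
/-- Determinant of the 3×3 matrix with columns `a`, `b`, `c`. -/
noncomputable def det3 (a b c : Fin 3 → ℝ) : ℝ :=
  Matrix.det !![a 0, b 0, c 0; a 1, b 1, c 1; a 2, b 2, c 2]

namespace BurgersAux

lemma hasDerivAt_partial_x {f : ℝ × ℝ → ℝ} (hf : ContDiff ℝ (⊤ : ℕ∞) f) (p : ℝ × ℝ) :
    HasDerivAt (fun s => f (p.1, s)) (fderiv ℝ f p ((0 : ℝ), (1 : ℝ))) p.2 := by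
  have hL : HasDerivAt (fun s : ℝ => ((p.1, s) : ℝ × ℝ)) ((0 : ℝ), (1 : ℝ)) p.2 :=
    (hasDerivAt_const p.2 p.1).prodMk (hasDerivAt_id p.2)
  have := ((hf.differentiable (by simp)) (p.1, p.2)).hasFDerivAt.comp_hasDerivAt p.2 hL
  exact this

lemma hasDerivAt_partial_t {f : ℝ × ℝ → ℝ} (hf : ContDiff ℝ (⊤ : ℕ∞) f) (p : ℝ × ℝ) :
    HasDerivAt (fun s => f (s, p.2)) (fderiv ℝ f p ((1 : ℝ), (0 : ℝ))) p.1 := by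
  have hL : HasDerivAt (fun s : ℝ => ((s, p.2) : ℝ × ℝ)) ((1 : ℝ), (0 : ℝ)) p.1 :=
    (hasDerivAt_id p.1).prodMk (hasDerivAt_const p.1 p.2)
  have := ((hf.differentiable (by simp)) (p.1, p.2)).hasFDerivAt.comp_hasDerivAt p.1 hL
  exact this

lemma px_eq_fderiv {f : ℝ × ℝ → ℝ} (hf : ContDiff ℝ (⊤ : ℕ∞) f) :
    px f = fun p => fderiv ℝ f p ((0 : ℝ), (1 : ℝ)) :=
  funext fun p => (hasDerivAt_partial_x hf p).deriv

lemma pt_eq_fderiv {f : ℝ × ℝ → ℝ} (hf : ContDiff ℝ (⊤ : ℕ∞) f) :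
    pt f = fun p => fderiv ℝ f p ((1 : ℝ), (0 : ℝ)) :=
  funext fun p => (hasDerivAt_partial_t hf p).deriv

lemma contDiff_px {f : ℝ × ℝ → ℝ} (hf : ContDiff ℝ (⊤ : ℕ∞) f) : ContDiff ℝ (⊤ : ℕ∞) (px f) := by
  rw [px_eq_fderiv hf]
  exact (hf.fderiv_right (by simp)).clm_apply contDiff_const

lemma contDiff_pt {f : ℝ × ℝ → ℝ} (hf : ContDiff ℝ (⊤ : ℕ∞) f) : ContDiff ℝ (⊤ : ℕ∞) (pt f) := by
  rw [pt_eq_fderiv hf]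
  exact (hf.fderiv_right (by simp)).clm_apply contDiff_const

lemma pt_px_comm {f : ℝ × ℝ → ℝ} (hf : ContDiff ℝ (⊤ : ℕ∞) f) : pt (px f) = px (pt f) := by
  have hd : Differentiable ℝ f := hf.differentiable (by simp)
  have hf' : ContDiff ℝ (⊤ : ℕ∞) (fderiv ℝ f) := hf.fderiv_right (by simp)
  funext p
  have h1 : ∀ v w : ℝ × ℝ,
      fderiv ℝ (fun q => fderiv ℝ f q v) p w = (fderiv ℝ (fderiv ℝ f) p w) v := by
    intro v w
    have := fderiv_clm_apply (c := fderiv ℝ f) (u := fun _ => v)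
      ((hf'.differentiable (by simp)) p) (differentiableAt_const v)
    simp [this]
  have hsymm : ∀ v w, (fderiv ℝ (fderiv ℝ f) p) v w = (fderiv ℝ (fderiv ℝ f) p) w v :=
    fun v w => second_derivative_symmetric (fun y => (hd y).hasFDerivAt)
      ((hf'.differentiable (by simp)) p).hasFDerivAt v w
  rw [pt_eq_fderiv (contDiff_px hf), px_eq_fderiv (contDiff_pt hf),
    px_eq_fderiv hf, pt_eq_fderiv hf]
  simp only [h1]
  exact hsymm _ _

def DX (f g : ℝ × ℝ → ℝ) : Prop := ∀ p : ℝ × ℝ, HasDerivAt (fun s => f (p.1, s)) (g p) p.2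
def DT (f g : ℝ × ℝ → ℝ) : Prop := ∀ p : ℝ × ℝ, HasDerivAt (fun s => f (s, p.2)) (g p) p.1

variable {f g f' g' : ℝ × ℝ → ℝ}

lemma DX.px_eq (hf : DX f f') : px f = f' := funext fun p => (hf p).deriv
lemma DT.pt_eq (hf : DT f f') : pt f = f' := funext fun p => (hf p).deriv
lemma DX.add (hf : DX f f') (hg : DX g g') : DX (fun p => f p + g p) (fun p => f' p + g' p) :=
  fun p => (hf p).add (hg p)
lemma DT.add (hf : DT f f') (hg : DT g g') : DT (fun p => f p + g p) (fun p => f' p + g' p) :=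
  fun p => (hf p).add (hg p)
lemma DX.sub (hf : DX f f') (hg : DX g g') : DX (fun p => f p - g p) (fun p => f' p - g' p) :=
  fun p => (hf p).sub (hg p)
lemma DT.sub (hf : DT f f') (hg : DT g g') : DT (fun p => f p - g p) (fun p => f' p - g' p) :=
  fun p => (hf p).sub (hg p)
lemma DX.neg (hf : DX f f') : DX (fun p => -f p) (fun p => -f' p) := fun p => (hf p).neg
lemma DT.neg (hf : DT f f') : DT (fun p => -f p) (fun p => -f' p) := fun p => (hf p).neg
lemma DX.mul (hf : DX f f') (hg : DX g g') :
    DX (fun p => f p * g p) (fun p => f' p * g p + f p * g' p) :=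
  fun p => (hf p).mul (hg p)
lemma DT.mul (hf : DT f f') (hg : DT g g') :
    DT (fun p => f p * g p) (fun p => f' p * g p + f p * g' p) :=
  fun p => (hf p).mul (hg p)
lemma DX.const_mul (c : ℝ) (hf : DX f f') : DX (fun p => c * f p) (fun p => c * f' p) :=
  fun p => (hf p).const_mul c
lemma DT.const_mul (c : ℝ) (hf : DT f f') : DT (fun p => c * f p) (fun p => c * f' p) :=
  fun p => (hf p).const_mul c
lemma DX.zero_of_zero (hf : DX f f') (h0 : ∀ p, f p = 0) : ∀ p, f' p = 0 := by
  intro p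
  have hz : (fun s => f (p.1, s)) = fun _ => (0:ℝ) := funext fun s => h0 _
  have h := hf p
  rw [hz] at h
  exact h.unique (hasDerivAt_const _ _)
lemma DT.zero_of_zero (hf : DT f f') (h0 : ∀ p, f p = 0) : ∀ p, f' p = 0 := by
  intro p
  have hz : (fun s => f (s, p.2)) = fun _ => (0:ℝ) := funext fun s => h0 _
  have h := hf p
  rw [hz] at h
  exact h.unique (hasDerivAt_const _ _)

lemma DX_of_contDiff (hf : ContDiff ℝ (⊤ : ℕ∞) f) : DX f (px f) := by
  intro p; rw [px_eq_fderiv hf]; exact hasDerivAt_partial_x hf p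
lemma DT_of_contDiff (hf : ContDiff ℝ (⊤ : ℕ∞) f) : DT f (pt f) := by
  intro p; rw [pt_eq_fderiv hf]; exact hasDerivAt_partial_t hf p

noncomputable def J1 (u : Fin 3 → ℝ × ℝ → ℝ) (i : Fin 3) : ℝ × ℝ → ℝ := px (u i)
noncomputable def J2 (u : Fin 3 → ℝ × ℝ → ℝ) (i : Fin 3) : ℝ × ℝ → ℝ := px (J1 u i)
noncomputable def J3 (u : Fin 3 → ℝ × ℝ → ℝ) (i : Fin 3) : ℝ × ℝ → ℝ := px (J2 u i)
noncomputable def J4 (u : Fin 3 → ℝ × ℝ → ℝ) (i : Fin 3) : ℝ × ℝ → ℝ := px (J3 u i)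

theorem key (u : Fin 3 → ℝ × ℝ → ℝ) (hu : ∀ i, ContDiff ℝ (⊤ : ℕ∞) (u i))
    (hburgers : ∀ i, ∀ p : ℝ × ℝ,
      pt (u i) p + u i p * px (u i) p + px (px (u i)) p = 0)
    (s0 s1 s2 : ℝ × ℝ → ℝ)
    (hs0 : ContDiff ℝ (⊤ : ℕ∞) s0) (hs1 : ContDiff ℝ (⊤ : ℕ∞) s1) (hs2 : ContDiff ℝ (⊤ : ℕ∞) s2)
    (hR : ∀ i p, 4 * J2 u i p + 6 * (u i p * J1 u i p) + u i p * (u i p * u i p)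
      - 2 * (s0 p * (2 * J1 u i p + u i p * u i p)) + 4 * (s1 p * u i p) + 4 * s2 p = 0)
    (hW : ∀ p, (2 * J1 u 0 p + u 0 p * u 0 p) * (u 2 p - u 1 p)
      + (2 * J1 u 1 p + u 1 p * u 1 p) * (u 0 p - u 2 p)
      + (2 * J1 u 2 p + u 2 p * u 2 p) * (u 1 p - u 0 p) ≠ 0) :
    ∀ p : ℝ × ℝ,
      pt s0 p + 2 * s0 p * px s0 p + px (px s0) p - 2 * px s1 p = 0 ∧
      pt s1 p + 2 * px s0 p * s1 p + px (px s1) p + px s2 p = 0 ∧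
      pt s2 p + 2 * px s0 p * s2 p + px (px s2) p = 0 := by
  intro p
  have hu1 : ∀ i, ContDiff ℝ (⊤ : ℕ∞) (J1 u i) := fun i => contDiff_px (hu i)
  have hu2 : ∀ i, ContDiff ℝ (⊤ : ℕ∞) (J2 u i) := fun i => contDiff_px (hu1 i)
  have hu3 : ∀ i, ContDiff ℝ (⊤ : ℕ∞) (J3 u i) := fun i => contDiff_px (hu2 i)
  have dx0 : ∀ i, DX (u i) (J1 u i) := fun i => DX_of_contDiff (hu i)
  have dx1 : ∀ i, DX (J1 u i) (J2 u i) := fun i => DX_of_contDiff (hu1 i)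
  have dx2 : ∀ i, DX (J2 u i) (J3 u i) := fun i => DX_of_contDiff (hu2 i)
  have dx3 : ∀ i, DX (J3 u i) (J4 u i) := fun i => DX_of_contDiff (hu3 i)
  -- t-derivatives of jets via Burgers and Clairaut
  have hpt0 : ∀ i, pt (u i) = fun q => -(u i q * J1 u i q) - J2 u i q := by
    intro i; funext q
    have h := hburgers i q
    show pt (u i) q = -(u i q * px (u i) q) - px (px (u i)) q
    linarith
  have dt0 : ∀ i, DT (u i) (fun q => -(u i q * J1 u i q) - J2 u i q) := by
    intro i
    have h := DT_of_contDiff (hu i)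
    rwa [hpt0 i] at h
  have hpt1 : ∀ i, pt (J1 u i) =
      fun q => -(J1 u i q * J1 u i q + u i q * J2 u i q) - J3 u i q := by
    intro i
    have h1 : pt (J1 u i) = px (pt (u i)) := pt_px_comm (hu i)
    rw [h1, hpt0 i]
    exact DX.px_eq ((((dx0 i).mul (dx1 i)).neg).sub (dx2 i))
  have dt1 : ∀ i, DT (J1 u i)
      (fun q => -(J1 u i q * J1 u i q + u i q * J2 u i q) - J3 u i q) := by
    intro i
    have h := DT_of_contDiff (hu1 i)
    rwa [hpt1 i] at h
  have hpt2 : ∀ i, pt (J2 u i) =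
      fun q => -((J2 u i q * J1 u i q + J1 u i q * J2 u i q)
        + (J1 u i q * J2 u i q + u i q * J3 u i q)) - J4 u i q := by
    intro i
    have h1 : pt (J2 u i) = px (pt (J1 u i)) := pt_px_comm (hu1 i)
    rw [h1, hpt1 i]
    exact DX.px_eq (((((dx1 i).mul (dx1 i)).add ((dx0 i).mul (dx2 i))).neg).sub (dx3 i))
  have dt2 : ∀ i, DT (J2 u i)
      (fun q => -((J2 u i q * J1 u i q + J1 u i q * J2 u i q)
        + (J1 u i q * J2 u i q + u i q * J3 u i q)) - J4 u i q) := by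
    intro i
    have h := DT_of_contDiff (hu2 i)
    rwa [hpt2 i] at h
  -- opaque derivatives of s0 s1 s2
  have ds0x : DX s0 (px s0) := DX_of_contDiff hs0
  have ds1x : DX s1 (px s1) := DX_of_contDiff hs1
  have ds2x : DX s2 (px s2) := DX_of_contDiff hs2
  have ds0xx : DX (px s0) (px (px s0)) := DX_of_contDiff (contDiff_px hs0)
  have ds1xx : DX (px s1) (px (px s1)) := DX_of_contDiff (contDiff_px hs1)
  have ds2xx : DX (px s2) (px (px s2)) := DX_of_contDiff (contDiff_px hs2)
  have ds0t : DT s0 (pt s0) := DT_of_contDiff hs0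
  have ds1t : DT s1 (pt s1) := DT_of_contDiff hs1
  have ds2t : DT s2 (pt s2) := DT_of_contDiff hs2
  -- the key pointwise combination for each solution
  have hq : ∀ i,
      -2 * (2 * J1 u i p + u i p * u i p)
          * (pt s0 p + 2 * s0 p * px s0 p + px (px s0) p - 2 * px s1 p)
        + 4 * u i p * (pt s1 p + 2 * px s0 p * s1 p + px (px s1) p + px s2 p)
        + 4 * (pt s2 p + 2 * px s0 p * s2 p + px (px s2) p) = 0 := by
    intro i
    have hdx : DX _ _ :=
      (((((DX.const_mul 4 (dx2 i)).add (DX.const_mul 6 ((dx0 i).mul (dx1 i)))).add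
          ((dx0 i).mul ((dx0 i).mul (dx0 i)))).sub
        (DX.const_mul 2 (ds0x.mul ((DX.const_mul 2 (dx1 i)).add ((dx0 i).mul (dx0 i)))))).add
        (DX.const_mul 4 (ds1x.mul (dx0 i)))).add (DX.const_mul 4 ds2x)
    have hEx := hdx.zero_of_zero (hR i)
    have hdxx : DX _ _ :=
      (((((DX.const_mul 4 (dx3 i)).add
            (DX.const_mul 6 (((dx1 i).mul (dx1 i)).add ((dx0 i).mul (dx2 i))))).add
          (((dx1 i).mul ((dx0 i).mul (dx0 i))).add
            ((dx0 i).mul (((dx1 i).mul (dx0 i)).add ((dx0 i).mul (dx1 i)))))).sub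
        (DX.const_mul 2
          ((ds0xx.mul ((DX.const_mul 2 (dx1 i)).add ((dx0 i).mul (dx0 i)))).add
           (ds0x.mul ((DX.const_mul 2 (dx2 i)).add
             (((dx1 i).mul (dx0 i)).add ((dx0 i).mul (dx1 i)))))))).add
        (DX.const_mul 4 ((ds1xx.mul (dx0 i)).add (ds1x.mul (dx1 i))))).add
        (DX.const_mul 4 ds2xx)
    have hExx := hdxx.zero_of_zero hEx
    have hdt : DT _ _ :=
      (((((DT.const_mul 4 (dt2 i)).add (DT.const_mul 6 ((dt0 i).mul (dt1 i)))).add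
          ((dt0 i).mul ((dt0 i).mul (dt0 i)))).sub
        (DT.const_mul 2 (ds0t.mul ((DT.const_mul 2 (dt1 i)).add ((dt0 i).mul (dt0 i)))))).add
        (DT.const_mul 4 (ds1t.mul (dt0 i)))).add (DT.const_mul 4 ds2t)
    have hEt := hdt.zero_of_zero (hR i)
    have e1 := hR i p
    have e2 := hEx p
    have e3 := hExx p
    have e4 := hEt p
    beta_reduce at e2 e3 e4
    linear_combination e4 + e3 + 2 * (px s0 p) * e1 + (u i p) * e2
  have q0 := hq 0
  have q1 := hq 1
  have q2 := hq 2
  have hWp := hW p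
  refine ⟨?_, ?_, ?_⟩
  · have hA : (pt s0 p + 2 * s0 p * px s0 p + px (px s0) p - 2 * px s1 p) *
        ((2 * J1 u 0 p + u 0 p * u 0 p) * (u 2 p - u 1 p)
          + (2 * J1 u 1 p + u 1 p * u 1 p) * (u 0 p - u 2 p)
          + (2 * J1 u 2 p + u 2 p * u 2 p) * (u 1 p - u 0 p)) = 0 := by
      linear_combination (-(1:ℝ)/2) * ((u 2 p - u 1 p) * q0 + (u 0 p - u 2 p) * q1
        + (u 1 p - u 0 p) * q2)
    exact (mul_eq_zero.mp hA).resolve_right hWp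
  · have hB : (pt s1 p + 2 * px s0 p * s1 p + px (px s1) p + px s2 p) *
        ((2 * J1 u 0 p + u 0 p * u 0 p) * (u 2 p - u 1 p)
          + (2 * J1 u 1 p + u 1 p * u 1 p) * (u 0 p - u 2 p)
          + (2 * J1 u 2 p + u 2 p * u 2 p) * (u 1 p - u 0 p)) = 0 := by
      linear_combination ((1:ℝ)/4) * (
        ((2 * J1 u 1 p + u 1 p * u 1 p) - (2 * J1 u 2 p + u 2 p * u 2 p)) * q0
        + ((2 * J1 u 2 p + u 2 p * u 2 p) - (2 * J1 u 0 p + u 0 p * u 0 p)) * q1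
        + ((2 * J1 u 0 p + u 0 p * u 0 p) - (2 * J1 u 1 p + u 1 p * u 1 p)) * q2)
    exact (mul_eq_zero.mp hB).resolve_right hWp
  · have hC : (pt s2 p + 2 * px s0 p * s2 p + px (px s2) p) *
        ((2 * J1 u 0 p + u 0 p * u 0 p) * (u 2 p - u 1 p)
          + (2 * J1 u 1 p + u 1 p * u 1 p) * (u 0 p - u 2 p)
          + (2 * J1 u 2 p + u 2 p * u 2 p) * (u 1 p - u 0 p)) = 0 := by
      linear_combination ((1:ℝ)/4) * (
        (u 1 p * (2 * J1 u 2 p + u 2 p * u 2 p) - u 2 p * (2 * J1 u 1 p + u 1 p * u 1 p)) * q0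
        + (u 2 p * (2 * J1 u 0 p + u 0 p * u 0 p) - u 0 p * (2 * J1 u 2 p + u 2 p * u 2 p)) * q1
        + (u 0 p * (2 * J1 u 1 p + u 1 p * u 1 p) - u 1 p * (2 * J1 u 0 p + u 0 p * u 0 p)) * q2)
    exact (mul_eq_zero.mp hC).resolve_right hWp

end BurgersAux

set_option maxHeartbeats 4000000 in
/-- The coefficients of no-go reduction operators of the Burgers equation expressed
via a triple of its solutions `ū` with `det[ē,ū,ȳ] ≠ 0`, where `yⁱ = 2uⁱ_x+(uⁱ)²` and
`zⁱ = 4uⁱ_xx+6uⁱuⁱ_x+(uⁱ)³`, satisfy the determining system. -/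
theorem stmt12 (u : Fin 3 → ℝ × ℝ → ℝ) (hu : ∀ i, ContDiff ℝ (⊤ : ℕ∞) (u i))
    (hburgers : ∀ i, ∀ p : ℝ × ℝ,
      pt (u i) p + u i p * px (u i) p + px (px (u i)) p = 0) :
    let e : ℝ × ℝ → Fin 3 → ℝ := fun _ _ => 1
    let y : ℝ × ℝ → Fin 3 → ℝ := fun p i => 2 * px (u i) p + (u i p) ^ 2
    let z : ℝ × ℝ → Fin 3 → ℝ := fun p i =>
      4 * px (px (u i)) p + 6 * u i p * px (u i) p + (u i p) ^ 3
    ∀ _ : (∀ p : ℝ × ℝ, det3 (e p) (fun i => u i p) (y p) ≠ 0),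
    let ξ0 : ℝ × ℝ → ℝ := fun p =>
      (1 / 2) * det3 (e p) (fun i => u i p) (z p) / det3 (e p) (fun i => u i p) (y p)
    let η1 : ℝ × ℝ → ℝ := fun p =>
      (1 / 4) * det3 (e p) (y p) (z p) / det3 (e p) (fun i => u i p) (y p)
    let η0 : ℝ × ℝ → ℝ := fun p =>
      -(1 / 4) * det3 (fun i => u i p) (y p) (z p) / det3 (e p) (fun i => u i p) (y p)
    ∀ p : ℝ × ℝ,
      pt ξ0 p + 2 * ξ0 p * px ξ0 p + px (px ξ0) p - 2 * px η1 p = 0 ∧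
      pt η1 p + 2 * px ξ0 p * η1 p + px (px η1) p + px η0 p = 0 ∧
      pt η0 p + 2 * px ξ0 p * η0 p + px (px η0) p = 0 := by
  intro e y z hW ξ0 η1 η0
  have c0 : ContDiff ℝ (⊤ : ℕ∞) (u 0) := hu 0
  have c1 : ContDiff ℝ (⊤ : ℕ∞) (u 1) := hu 1
  have c2 : ContDiff ℝ (⊤ : ℕ∞) (u 2) := hu 2
  have c0x : ContDiff ℝ (⊤ : ℕ∞) (px (u 0)) := BurgersAux.contDiff_px (hu 0)
  have c1x : ContDiff ℝ (⊤ : ℕ∞) (px (u 1)) := BurgersAux.contDiff_px (hu 1)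
  have c2x : ContDiff ℝ (⊤ : ℕ∞) (px (u 2)) := BurgersAux.contDiff_px (hu 2)
  have c0xx : ContDiff ℝ (⊤ : ℕ∞) (px (px (u 0))) := BurgersAux.contDiff_px c0x
  have c1xx : ContDiff ℝ (⊤ : ℕ∞) (px (px (u 1))) := BurgersAux.contDiff_px c1x
  have c2xx : ContDiff ℝ (⊤ : ℕ∞) (px (px (u 2))) := BurgersAux.contDiff_px c2x
  have eW : ∀ q : ℝ × ℝ, det3 (e q) (fun i => u i q) (y q) = -2 * (px (u 1) q) * (u 2 q) + 2 * (u 1 q) * (px (u 2) q) + 1 * (u 1 q) * (u 2 q) * (u 2 q) - 1 * (u 1 q) * (u 1 q) * (u 2 q) + 2 * (px (u 0) q) * (u 2 q) - 2 * (px (u 0) q) * (u 1 q) - 2 * (u 0 q) * (px (u 2) q) - 1 * (u 0 q) * (u 2 q) * (u 2 q) + 2 * (u 0 q) * (px (u 1) q) + 1 * (u 0 q) * (u 1 q) * (u 1 q) + 1 * (u 0 q) * (u 0 q) * (u 2 q) - 1 * (u 0 q) * (u 0 q) * (u 1 q) := by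
    intro q
    simp only [e, y, det3, Matrix.det_fin_three, Matrix.of_apply, Matrix.cons_val',
      Matrix.cons_val_zero, Matrix.cons_val_one, Matrix.head_cons, Matrix.empty_val',
      Matrix.cons_val_fin_one, Matrix.head_fin_const, Matrix.cons_val_two, Matrix.tail_cons]
    ring
  have eN1 : ∀ q : ℝ × ℝ, det3 (e q) (fun i => u i q) (z q) = -4 * (px (px (u 1)) q) * (u 2 q) + 4 * (u 1 q) * (px (px (u 2)) q) + 6 * (u 1 q) * (u 2 q) * (px (u 2) q) + 1 * (u 1 q) * (u 2 q) * (u 2 q) * (u 2 q) - 6 * (u 1 q) * (px (u 1) q) * (u 2 q) - 1 * (u 1 q) * (u 1 q) * (u 1 q) * (u 2 q) + 4 * (px (px (u 0)) q) * (u 2 q) - 4 * (px (px (u 0)) q) * (u 1 q) - 4 * (u 0 q) * (px (px (u 2)) q) - 6 * (u 0 q) * (u 2 q) * (px (u 2) q) - 1 * (u 0 q) * (u 2 q) * (u 2 q) * (u 2 q) + 4 * (u 0 q) * (px (px (u 1)) q) + 6 * (u 0 q) * (u 1 q) * (px (u 1) q) + 1 * (u 0 q) * (u 1 q) * (u 1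 q) * (u 1 q) + 6 * (u 0 q) * (px (u 0) q) * (u 2 q) - 6 * (u 0 q) * (px (u 0) q) * (u 1 q) + 1 * (u 0 q) * (u 0 q) * (u 0 q) * (u 2 q) - 1 * (u 0 q) * (u 0 q) * (u 0 q) * (u 1 q) := by
    intro q
    simp only [e, z, det3, Matrix.det_fin_three, Matrix.of_apply, Matrix.cons_val',
      Matrix.cons_val_zero, Matrix.cons_val_one, Matrix.head_cons, Matrix.empty_val',
      Matrix.cons_val_fin_one, Matrix.head_fin_const, Matrix.cons_val_two, Matrix.tail_cons]
    ring
  have eN2 : ∀ q : ℝ × ℝ, det3 (e q) (y q) (z q) = -8 * (px (px (u 1)) q) * (px (u 2) q) - 4 * (px (px (u 1)) q) * (u 2 q) * (u 2 q) + 8 * (px (u 1) q) * (px (px (u 2)) q) + 12 * (px (u 1) q) * (u 2 q) * (px (u 2) q) + 2 * (px (u 1) q) * (u 2 q) * (u 2 q) * (u 2 q) - 12 * (u 1 q) * (px (u 1) q) * (px (u 2) q) - 6 * (u 1 q) * (px (u 1) q) * (u 2 q) * (u 2 q) + 4 * (u 1 q) * (u 1 q) * (px (px (u 2)) q) + 6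 * (u 1 q) * (u 1 q) * (u 2 q) * (px (u 2) q) + 1 * (u 1 q) * (u 1 q) * (u 2 q) * (u 2 q) * (u 2 q) - 2 * (u 1 q) * (u 1 q) * (u 1 q) * (px (u 2) q) - 1 * (u 1 q) * (u 1 q) * (u 1 q) * (u 2 q) * (u 2 q) + 8 * (px (px (u 0)) q) * (px (u 2) q) + 4 * (px (px (u 0)) q) * (u 2 q) * (u 2 q) - 8 * (px (px (u 0)) q) * (px (u 1) q) - 4 * (px (px (u 0)) q) * (u 1 q) * (u 1 q) - 8 * (px (u 0) q) * (px (px (u 2)) q) - 12 * (px (u 0) q) * (u 2 q) * (px (u 2) q) - 2 * (px (u 0) q) * (u 2 q) * (u 2 q) * (u 2 q) + 8 * (px (u 0) q) * (px (px (u 1)) q) + 12 * (px (u 0) q) * (u 1 q) * (px (u 1) q) + 2 * (px (u 0) q) * (u 1 q) * (u 1 q) * (u 1 q) + 12 * (u 0 q) * (px (u 0) q) * (px (u 2) q) + 6 * (u 0 q) * (px (u 0) q) * (u 2 q) * (u 2 q) - 12 * (u 0 q) * (px (u 0) q) * (px (u 1) q) - 6 * (u 0 q) * (px (u 0) q) *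 (u 1 q) * (u 1 q) - 4 * (u 0 q) * (u 0 q) * (px (px (u 2)) q) - 6 * (u 0 q) * (u 0 q) * (u 2 q) * (px (u 2) q) - 1 * (u 0 q) * (u 0 q) * (u 2 q) * (u 2 q) * (u 2 q) + 4 * (u 0 q) * (u 0 q) * (px (px (u 1)) q) + 6 * (u 0 q) * (u 0 q) * (u 1 q) * (px (u 1) q) + 1 * (u 0 q) * (u 0 q) * (u 1 q) * (u 1 q) * (u 1 q) + 2 * (u 0 q) * (u 0 q) * (u 0 q) * (px (u 2) q) + 1 * (u 0 q) * (u 0 q) * (u 0 q) * (u 2 q) * (u 2 q) - 2 * (u 0 q) * (u 0 q) * (u 0 q) * (px (u 1) q) - 1 * (u 0 q) * (u 0 q) * (u 0 q) * (u 1 q) * (u 1 q) := by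
    intro q
    simp only [e, y, z, det3, Matrix.det_fin_three, Matrix.of_apply, Matrix.cons_val',
      Matrix.cons_val_zero, Matrix.cons_val_one, Matrix.head_cons, Matrix.empty_val',
      Matrix.cons_val_fin_one, Matrix.head_fin_const, Matrix.cons_val_two, Matrix.tail_cons]
    ring
  have eN3 : ∀ q : ℝ × ℝ, det3 (fun i => u i q) (y q) (z q) = -8 * (px (px (u 0)) q) * (px (u 1) q) * (u 2 q) + 8 * (px (px (u 0)) q) * (u 1 q) * (px (u 2) q) + 4 * (px (px (u 0)) q) * (u 1 q) * (u 2 q) * (u 2 q) - 4 * (px (px (u 0)) q) * (u 1 q) * (u 1 q) * (u 2 q) + 8 * (px (u 0) q) * (px (px (u 1)) q) * (u 2 q) - 8 * (px (u 0) q) * (u 1 q) * (px (px (u 2)) q) - 12 * (px (u 0) q) * (u 1 q) * (u 2 q) * (px (u 2) q) - 2 * (px (u 0) q) * (u 1 q) * (u 2 q) * (u 2 q) * (u 2 q) + 12 * (px (u 0) q) * (u 1 q) * (px (u 1) q) * (u 2 q) + 2 * (px (u 0) q) * (u 1 q) * (u 1 q) * (u 1 q) * (u 2 q) - 8 * (u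 0 q) * (px (px (u 1)) q) * (px (u 2) q) - 4 * (u 0 q) * (px (px (u 1)) q) * (u 2 q) * (u 2 q) + 8 * (u 0 q) * (px (u 1) q) * (px (px (u 2)) q) + 12 * (u 0 q) * (px (u 1) q) * (u 2 q) * (px (u 2) q) + 2 * (u 0 q) * (px (u 1) q) * (u 2 q) * (u 2 q) * (u 2 q) - 12 * (u 0 q) * (u 1 q) * (px (u 1) q) * (px (u 2) q) - 6 * (u 0 q) * (u 1 q) * (px (u 1) q) * (u 2 q) * (u 2 q) + 4 * (u 0 q) * (u 1 q) * (u 1 q) * (px (px (u 2)) q) + 6 * (u 0 q) * (u 1 q) * (u 1 q) * (u 2 q) * (px (u 2) q) + 1 * (u 0 q) * (u 1 q) * (u 1 q) * (u 2 q) * (u 2 q) * (u 2 q) - 2 * (u 0 q) * (u 1 q) * (u 1 q) * (u 1 q) * (px (u 2) q) - 1 * (u 0 q) * (u 1 q) * (u 1 q) * (u 1 q) * (u 2 q) * (u 2 q) - 12 * (u 0 q) * (px (u 0) q) * (px (u 1) q) * (u 2 q) + 12 * (u 0 q) * (px (u 0) q) * (u 1 q) * (px (u 2) q) + 6 * (u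 0 q) * (px (u 0) q) * (u 1 q) * (u 2 q) * (u 2 q) - 6 * (u 0 q) * (px (u 0) q) * (u 1 q) * (u 1 q) * (u 2 q) + 4 * (u 0 q) * (u 0 q) * (px (px (u 1)) q) * (u 2 q) - 4 * (u 0 q) * (u 0 q) * (u 1 q) * (px (px (u 2)) q) - 6 * (u 0 q) * (u 0 q) * (u 1 q) * (u 2 q) * (px (u 2) q) - 1 * (u 0 q) * (u 0 q) * (u 1 q) * (u 2 q) * (u 2 q) * (u 2 q) + 6 * (u 0 q) * (u 0 q) * (u 1 q) * (px (u 1) q) * (u 2 q) + 1 * (u 0 q) * (u 0 q) * (u 1 q) * (u 1 q) * (u 1 q) * (u 2 q) - 2 * (u 0 q) * (u 0 q) * (u 0 q) * (px (u 1) q) * (u 2 q) + 2 * (u 0 q) * (u 0 q) * (u 0 q) * (u 1 q) * (px (u 2) q) + 1 * (u 0 q) * (u 0 q) * (u 0 q) * (u 1 q) * (u 2 q) * (u 2 q) - 1 * (u 0 q) * (u 0 q) * (u 0 q) * (u 1 q) * (u 1 q) * (u 2 q) := by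
    intro q
    simp only [y, z, det3, Matrix.det_fin_three, Matrix.of_apply, Matrix.cons_val',
      Matrix.cons_val_zero, Matrix.cons_val_one, Matrix.head_cons, Matrix.empty_val',
      Matrix.cons_val_fin_one, Matrix.head_fin_const, Matrix.cons_val_two, Matrix.tail_cons]
    ring
  have hWc : ContDiff ℝ (⊤ : ℕ∞) (fun q => det3 (e q) (fun i => u i q) (y q)) := by
    rw [funext eW]; fun_prop
  have hZc : ContDiff ℝ (⊤ : ℕ∞) (fun q => det3 (e q) (fun i => u i q) (z q)) := by
    rw [funext eN1]; fun_prop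
  have hYZc : ContDiff ℝ (⊤ : ℕ∞) (fun q => det3 (e q) (y q) (z q)) := by
    rw [funext eN2]; fun_prop
  have hUYZc : ContDiff ℝ (⊤ : ℕ∞) (fun q => det3 (fun i => u i q) (y q) (z q)) := by
    rw [funext eN3]; fun_prop
  have hs0 : ContDiff ℝ (⊤ : ℕ∞) ξ0 := (contDiff_const.mul hZc).div hWc hW
  have hs1 : ContDiff ℝ (⊤ : ℕ∞) η1 := (contDiff_const.mul hYZc).div hWc hW
  have hs2 : ContDiff ℝ (⊤ : ℕ∞) η0 := (contDiff_const.mul hUYZc).div hWc hW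
  have hWp : ∀ q : ℝ × ℝ, (-2 * (px (u 1) q) * (u 2 q) + 2 * (u 1 q) * (px (u 2) q) + 1 * (u 1 q) * (u 2 q) * (u 2 q) - 1 * (u 1 q) * (u 1 q) * (u 2 q) + 2 * (px (u 0) q) * (u 2 q) - 2 * (px (u 0) q) * (u 1 q) - 2 * (u 0 q) * (px (u 2) q) - 1 * (u 0 q) * (u 2 q) * (u 2 q) + 2 * (u 0 q) * (px (u 1) q) + 1 * (u 0 q) * (u 1 q) * (u 1 q) + 1 * (u 0 q) * (u 0 q) * (u 2 q) - 1 * (u 0 q) * (u 0 q) * (u 1 q)) ≠ 0 := by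
    intro q
    rw [← eW q]; exact hW q
  have hz : ∀ N1v N2v N3v Wv A B C : ℝ, Wv ≠ 0 →
      A * Wv - N1v * B + N2v * C - N3v = 0 →
      A - 2 * (1 / 2 * N1v / Wv * B) + 4 * (1 / 4 * N2v / Wv * C)
        + 4 * (-(1 / 4) * N3v / Wv) = 0 := by
    intro N1v N2v N3v Wv A B C hWv hid
    have h3 : A - 2 * (1 / 2 * N1v / Wv * B) + 4 * (1 / 4 * N2v / Wv * C)
        + 4 * (-(1 / 4) * N3v / Wv) = (A * Wv - N1v * B + N2v * C - N3v) / Wv := by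
      field_simp
      ring
    rw [h3, hid, zero_div]
  have hR : ∀ i p, 4 * BurgersAux.J2 u i p + 6 * (u i p * BurgersAux.J1 u i p)
      + u i p * (u i p * u i p)
      - 2 * (ξ0 p * (2 * BurgersAux.J1 u i p + u i p * u i p)) + 4 * (η1 p * u i p)
      + 4 * η0 p = 0 := by
    intro i q
    have base : (4 * px (px (u i)) q + 6 * (u i q * px (u i) q) + u i q * (u i q * u i q))
          * (-2 * (px (u 1) q) * (u 2 q) + 2 * (u 1 q) * (px (u 2) q) + 1 * (u 1 q) * (u 2 q) * (u 2 q) - 1 * (u 1 q) * (u 1 q) * (u 2 q) + 2 * (px (u 0) q) * (u 2 q) - 2 * (px (u 0) q) * (u 1 q) - 2 * (u 0 q) * (px (u 2) q) - 1 * (u 0 q) * (u 2 q) * (u 2 q) + 2 * (u 0 q) * (px (u 1) q) + 1 * (u 0 q) * (u 1 q) * (u 1 q) + 1 * (u 0 q) * (u 0 q) * (u 2 q) - 1 * (u 0 q) * (u 0 q) * (u 1 q))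
        - (-4 * (px (px (u 1)) q) * (u 2 q) + 4 * (u 1 q) * (px (px (u 2)) q) + 6 * (u 1 q) * (u 2 q) * (px (u 2) q) + 1 * (u 1 q) * (u 2 q) * (u 2 q) * (u 2 q) - 6 * (u 1 q) * (px (u 1) q) * (u 2 q) - 1 * (u 1 q) * (u 1 q) * (u 1 q) * (u 2 q) + 4 * (px (px (u 0)) q) * (u 2 q) - 4 * (px (px (u 0)) q) * (u 1 q) - 4 * (u 0 q) * (px (px (u 2)) q) - 6 * (u 0 q) * (u 2 q) * (px (u 2) q) - 1 * (u 0 q) * (u 2 q) * (u 2 q) * (u 2 q) + 4 * (u 0 q) * (px (px (u 1)) q) + 6 * (u 0 q) * (u 1 q) * (px (u 1) q) + 1 * (u 0 q) * (u 1 q) * (u 1 q) * (u 1 q) + 6 * (u 0 q) * (px (u 0) q) * (u 2 q) - 6 * (u 0 q) * (px (u 0) q) * (u 1 q) + 1 * (u 0 q) * (u 0 q) * (u 0 q) * (u 2 q) - 1 * (u 0 q) * (u 0 q) * (u 0 q) * (u 1 q)) * (2 * px (u i) q + u i q * u i q)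
        + (-8 * (px (px (u 1)) q) * (px (u 2) q) - 4 * (px (px (u 1)) q) * (u 2 q) * (u 2 q) + 8 * (px (u 1) q) * (px (px (u 2)) q) + 12 * (px (u 1) q) * (u 2 q) * (px (u 2) q) + 2 * (px (u 1) q) * (u 2 q) * (u 2 q) * (u 2 q) - 12 * (u 1 q) * (px (u 1) q) * (px (u 2) q) - 6 * (u 1 q) * (px (u 1) q) * (u 2 q) * (u 2 q) + 4 * (u 1 q) * (u 1 q) * (px (px (u 2)) q) + 6 * (u 1 q) * (u 1 q) * (u 2 q) * (px (u 2) q) + 1 * (u 1 q) * (u 1 q) * (u 2 q) * (u 2 q) * (u 2 q) - 2 * (u 1 q) * (u 1 q) * (u 1 q) * (px (u 2) q) - 1 * (u 1 q) * (u 1 q) * (u 1 q) * (u 2 q) * (u 2 q) + 8 * (px (px (u 0)) q) * (px (u 2) q) + 4 * (px (px (u 0)) q) * (u 2 q) * (u 2 q) - 8 * (px (px (u 0)) q) * (px (u 1) q) - 4 * (px (px (u 0)) q) * (u 1 q) * (u 1 q) - 8 * (px (u 0) q) * (px (px (u 2)) q) - 12 * (px (u 0) q) * (u 2 q) * (px (u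 2) q) - 2 * (px (u 0) q) * (u 2 q) * (u 2 q) * (u 2 q) + 8 * (px (u 0) q) * (px (px (u 1)) q) + 12 * (px (u 0) q) * (u 1 q) * (px (u 1) q) + 2 * (px (u 0) q) * (u 1 q) * (u 1 q) * (u 1 q) + 12 * (u 0 q) * (px (u 0) q) * (px (u 2) q) + 6 * (u 0 q) * (px (u 0) q) * (u 2 q) * (u 2 q) - 12 * (u 0 q) * (px (u 0) q) * (px (u 1) q) - 6 * (u 0 q) * (px (u 0) q) * (u 1 q) * (u 1 q) - 4 * (u 0 q) * (u 0 q) * (px (px (u 2)) q) - 6 * (u 0 q) * (u 0 q) * (u 2 q) * (px (u 2) q) - 1 * (u 0 q) * (u 0 q) * (u 2 q) * (u 2 q) * (u 2 q) + 4 * (u 0 q) * (u 0 q) * (px (px (u 1)) q) + 6 * (u 0 q) * (u 0 q) * (u 1 q) * (px (u 1) q) + 1 * (u 0 q) * (u 0 q) * (u 1 q) * (u 1 q) * (u 1 q) + 2 * (u 0 q) * (u 0 q) * (u 0 q) * (px (u 2) q) + 1 * (u 0 q) * (u 0 q) * (u 0 q) * (u 2 q) * (u 2 q) - 2 * (u 0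 q) * (u 0 q) * (u 0 q) * (px (u 1) q) - 1 * (u 0 q) * (u 0 q) * (u 0 q) * (u 1 q) * (u 1 q)) * (u i q)
        - (-8 * (px (px (u 0)) q) * (px (u 1) q) * (u 2 q) + 8 * (px (px (u 0)) q) * (u 1 q) * (px (u 2) q) + 4 * (px (px (u 0)) q) * (u 1 q) * (u 2 q) * (u 2 q) - 4 * (px (px (u 0)) q) * (u 1 q) * (u 1 q) * (u 2 q) + 8 * (px (u 0) q) * (px (px (u 1)) q) * (u 2 q) - 8 * (px (u 0) q) * (u 1 q) * (px (px (u 2)) q) - 12 * (px (u 0) q) * (u 1 q) * (u 2 q) * (px (u 2) q) - 2 * (px (u 0) q) * (u 1 q) * (u 2 q) * (u 2 q) * (u 2 q) + 12 * (px (u 0) q) * (u 1 q) * (px (u 1) q) * (u 2 q) + 2 * (px (u 0) q) * (u 1 q) * (u 1 q) * (u 1 q) * (u 2 q) - 8 * (u 0 q) * (px (px (u 1)) q) * (px (u 2) q) - 4 * (u 0 q) * (px (px (u 1)) q) * (u 2 q) * (u 2 q) + 8 * (u 0 q) * (px (u 1) q) * (px (px (u 2)) q) + 12 * (u 0 q)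 * (px (u 1) q) * (u 2 q) * (px (u 2) q) + 2 * (u 0 q) * (px (u 1) q) * (u 2 q) * (u 2 q) * (u 2 q) - 12 * (u 0 q) * (u 1 q) * (px (u 1) q) * (px (u 2) q) - 6 * (u 0 q) * (u 1 q) * (px (u 1) q) * (u 2 q) * (u 2 q) + 4 * (u 0 q) * (u 1 q) * (u 1 q) * (px (px (u 2)) q) + 6 * (u 0 q) * (u 1 q) * (u 1 q) * (u 2 q) * (px (u 2) q) + 1 * (u 0 q) * (u 1 q) * (u 1 q) * (u 2 q) * (u 2 q) * (u 2 q) - 2 * (u 0 q) * (u 1 q) * (u 1 q) * (u 1 q) * (px (u 2) q) - 1 * (u 0 q) * (u 1 q) * (u 1 q) * (u 1 q) * (u 2 q) * (u 2 q) - 12 * (u 0 q) * (px (u 0) q) * (px (u 1) q) * (u 2 q) + 12 * (u 0 q) * (px (u 0) q) * (u 1 q) * (px (u 2) q) + 6 * (u 0 q) * (px (u 0) q) * (u 1 q) * (u 2 q) * (u 2 q) - 6 * (u 0 q) * (px (u 0) q) * (u 1 q) * (u 1 q) * (u 2 q) + 4 * (u 0 q) * (u 0 q) * (px (px (u 1))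 q) * (u 2 q) - 4 * (u 0 q) * (u 0 q) * (u 1 q) * (px (px (u 2)) q) - 6 * (u 0 q) * (u 0 q) * (u 1 q) * (u 2 q) * (px (u 2) q) - 1 * (u 0 q) * (u 0 q) * (u 1 q) * (u 2 q) * (u 2 q) * (u 2 q) + 6 * (u 0 q) * (u 0 q) * (u 1 q) * (px (u 1) q) * (u 2 q) + 1 * (u 0 q) * (u 0 q) * (u 1 q) * (u 1 q) * (u 1 q) * (u 2 q) - 2 * (u 0 q) * (u 0 q) * (u 0 q) * (px (u 1) q) * (u 2 q) + 2 * (u 0 q) * (u 0 q) * (u 0 q) * (u 1 q) * (px (u 2) q) + 1 * (u 0 q) * (u 0 q) * (u 0 q) * (u 1 q) * (u 2 q) * (u 2 q) - 1 * (u 0 q) * (u 0 q) * (u 0 q) * (u 1 q) * (u 1 q) * (u 2 q)) = 0 := by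
      have hi : i = 0 ∨ i = 1 ∨ i = 2 := by omega
      rcases hi with rfl | rfl | rfl <;> ring
    simp only [BurgersAux.J1, BurgersAux.J2, ξ0, η1, η0]
    rw [eW q, eN1 q, eN2 q, eN3 q]
    exact hz _ _ _ _ _ _ _ (hWp q) base
  have hWne : ∀ p, (2 * BurgersAux.J1 u 0 p + u 0 p * u 0 p) * (u 2 p - u 1 p)
      + (2 * BurgersAux.J1 u 1 p + u 1 p * u 1 p) * (u 0 p - u 2 p)
      + (2 * BurgersAux.J1 u 2 p + u 2 p * u 2 p) * (u 1 p - u 0 p) ≠ 0 := by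
    intro q h
    refine hWp q ?_
    simp only [BurgersAux.J1] at h
    linear_combination h
  exact BurgersAux.key u hu hburgers ξ0 η1 η0 hs0 hs1 hs2 hR hWne
end

section
/- Let ξ, η : ℝ³ → ℝ be smooth functions of (t,x,u) satisfying the determining system for regular reduction operators of the Burgers equation: (i) ξ_uu = 0; (ii) −2ξ_xu − 2ξ_u·ξ + 2u·ξ_u + η_uu = 0; (iii) 2η_xu + 2ξ_u·η + η − ξ_t + u·ξ_x − ξ_xx − 2ξ_x·ξ = 0; (iv) η_t + u·η_x + η_xx + 2ξ_x·η = 0, all holding at every point (t,x,u) ∈ ℝ³. Then the partial derivative ξ_u is a constant function on ℝ³, and its value belongs to the set {0, 1, −1/2}. -/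
lemma slice1_hasDerivAt {f : ℝ × ℝ × ℝ → ℝ} (hf : Differentiable ℝ f) (t x u : ℝ) :
    HasDerivAt (fun s => f (s, x, u)) (fderiv ℝ f (t, x, u) (1, 0, 0)) t := by
  have hc : HasDerivAt (fun s : ℝ => ((s, x, u) : ℝ × ℝ × ℝ)) ((1:ℝ), (0:ℝ), (0:ℝ)) t := by
    simpa using (hasDerivAt_id t).prodMk ((hasDerivAt_const t x).prodMk (hasDerivAt_const t u))
  exact (hf (t, x, u)).hasFDerivAt.comp_hasDerivAt t hc

lemma slice2_hasDerivAt {f : ℝ × ℝ × ℝ → ℝ} (hf : Differentiable ℝ f) (t x u : ℝ) :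
    HasDerivAt (fun s => f (t, s, u)) (fderiv ℝ f (t, x, u) (0, 1, 0)) x := by
  have hc : HasDerivAt (fun s : ℝ => ((t, s, u) : ℝ × ℝ × ℝ)) ((0:ℝ), (1:ℝ), (0:ℝ)) x := by
    simpa using (hasDerivAt_const x t).prodMk ((hasDerivAt_id x).prodMk (hasDerivAt_const x u))
  exact (hf (t, x, u)).hasFDerivAt.comp_hasDerivAt x hc

lemma slice3_hasDerivAt {f : ℝ × ℝ × ℝ → ℝ} (hf : Differentiable ℝ f) (t x u : ℝ) :
    HasDerivAt (fun s => f (t, x, s)) (fderiv ℝ f (t, x, u) (0, 0, 1)) u := by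
  have hc : HasDerivAt (fun s : ℝ => ((t, x, s) : ℝ × ℝ × ℝ)) ((0:ℝ), (0:ℝ), (1:ℝ)) u := by
    simpa using (hasDerivAt_const u t).prodMk ((hasDerivAt_const u x).prodMk (hasDerivAt_id u))
  exact (hf (t, x, u)).hasFDerivAt.comp_hasDerivAt u hc

lemma p1_eq_fderiv {f : ℝ × ℝ × ℝ → ℝ} (hf : Differentiable ℝ f) (p : ℝ × ℝ × ℝ) :
    p1 f p = fderiv ℝ f p (1, 0, 0) := by
  obtain ⟨t, x, u⟩ := p
  exact (slice1_hasDerivAt hf t x u).deriv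

lemma p2_eq_fderiv {f : ℝ × ℝ × ℝ → ℝ} (hf : Differentiable ℝ f) (p : ℝ × ℝ × ℝ) :
    p2 f p = fderiv ℝ f p (0, 1, 0) := by
  obtain ⟨t, x, u⟩ := p
  exact (slice2_hasDerivAt hf t x u).deriv

lemma p3_eq_fderiv {f : ℝ × ℝ × ℝ → ℝ} (hf : Differentiable ℝ f) (p : ℝ × ℝ × ℝ) :
    p3 f p = fderiv ℝ f p (0, 0, 1) := by
  obtain ⟨t, x, u⟩ := p
  exact (slice3_hasDerivAt hf t x u).deriv

lemma contDiff_fderiv_apply {f : ℝ × ℝ × ℝ → ℝ} (hf : ContDiff ℝ (⊤ : ℕ∞) f) (v : ℝ × ℝ × ℝ) :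
    ContDiff ℝ (⊤ : ℕ∞) (fun p => fderiv ℝ f p v) :=
  (hf.fderiv_right (by simp)).clm_apply contDiff_const

lemma p1_smooth {f : ℝ × ℝ × ℝ → ℝ} (hf : ContDiff ℝ (⊤ : ℕ∞) f) : ContDiff ℝ (⊤ : ℕ∞) (p1 f) := by
  rw [show p1 f = fun p => fderiv ℝ f p (1, 0, 0) from
    funext (p1_eq_fderiv (hf.differentiable (by simp)))]
  exact contDiff_fderiv_apply hf _

lemma p2_smooth {f : ℝ × ℝ × ℝ → ℝ} (hf : ContDiff ℝ (⊤ : ℕ∞) f) : ContDiff ℝ (⊤ : ℕ∞) (p2 f) := by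
  rw [show p2 f = fun p => fderiv ℝ f p (0, 1, 0) from
    funext (p2_eq_fderiv (hf.differentiable (by simp)))]
  exact contDiff_fderiv_apply hf _

lemma p3_smooth {f : ℝ × ℝ × ℝ → ℝ} (hf : ContDiff ℝ (⊤ : ℕ∞) f) : ContDiff ℝ (⊤ : ℕ∞) (p3 f) := by
  rw [show p3 f = fun p => fderiv ℝ f p (0, 0, 1) from
    funext (p3_eq_fderiv (hf.differentiable (by simp)))]
  exact contDiff_fderiv_apply hf _

lemma pd_comm {f : ℝ × ℝ × ℝ → ℝ} (hf : ContDiff ℝ (⊤ : ℕ∞) f) (v w p : ℝ × ℝ × ℝ) :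
    fderiv ℝ (fun q => fderiv ℝ f q v) p w = fderiv ℝ (fun q => fderiv ℝ f q w) p v := by
  have hdf : DifferentiableAt ℝ (fderiv ℝ f) p :=
    ((hf.fderiv_right (m := 1) (by exact (WithTop.coe_le_coe.mpr le_top : ((2 : ℕ∞) : WithTop ℕ∞) ≤ ((⊤ : ℕ∞) : WithTop ℕ∞)))).differentiable (by simp)).differentiableAt
  have key : ∀ a b : ℝ × ℝ × ℝ,
      fderiv ℝ (fun q => fderiv ℝ f q a) p b = fderiv ℝ (fderiv ℝ f) p b a := by
    intro a b
    have h := (ContinuousLinearMap.apply ℝ ℝ a).hasFDerivAt.comp p hdf.hasFDerivAt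
    have he : (fun q => fderiv ℝ f q a)
        = (⇑(ContinuousLinearMap.apply ℝ ℝ a) ∘ fderiv ℝ f) := rfl
    rw [he, h.fderiv]
    rfl
  rw [key v w, key w v]
  exact (hf.contDiffAt.isSymmSndFDerivAt (by rw [minSmoothness_of_isRCLikeNormedField]; exact (WithTop.coe_le_coe.mpr le_top : ((2 : ℕ∞) : WithTop ℕ∞) ≤ ((⊤ : ℕ∞) : WithTop ℕ∞)))) w v

lemma p3_p1_comm {f : ℝ × ℝ × ℝ → ℝ} (hf : ContDiff ℝ (⊤ : ℕ∞) f) (p : ℝ × ℝ × ℝ) :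
    p3 (p1 f) p = p1 (p3 f) p := by
  have hd := hf.differentiable (by simp)
  rw [p3_eq_fderiv ((p1_smooth hf).differentiable (by simp)) p,
      p1_eq_fderiv ((p3_smooth hf).differentiable (by simp)) p,
      show p1 f = fun q => fderiv ℝ f q (1,0,0) from funext (p1_eq_fderiv hd),
      show p3 f = fun q => fderiv ℝ f q (0,0,1) from funext (p3_eq_fderiv hd)]
  exact pd_comm hf _ _ p

lemma p3_p2_comm {f : ℝ × ℝ × ℝ → ℝ} (hf : ContDiff ℝ (⊤ : ℕ∞) f) (p : ℝ × ℝ × ℝ) :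
    p3 (p2 f) p = p2 (p3 f) p := by
  have hd := hf.differentiable (by simp)
  rw [p3_eq_fderiv ((p2_smooth hf).differentiable (by simp)) p,
      p2_eq_fderiv ((p3_smooth hf).differentiable (by simp)) p,
      show p2 f = fun q => fderiv ℝ f q (0,1,0) from funext (p2_eq_fderiv hd),
      show p3 f = fun q => fderiv ℝ f q (0,0,1) from funext (p3_eq_fderiv hd)]
  exact pd_comm hf _ _ p

lemma p1_zero : p1 (fun _ => (0:ℝ)) = fun _ => 0 := by
  funext p; simp [p1]

lemma p2_zero : p2 (fun _ => (0:ℝ)) = fun _ => 0 := by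
  funext p; simp [p2]

lemma hD3 {f : ℝ × ℝ × ℝ → ℝ} (hf : ContDiff ℝ (⊤ : ℕ∞) f) (t x u : ℝ) :
    HasDerivAt (fun s => f (t, x, s)) (p3 f (t, x, u)) u := by
  have h := slice3_hasDerivAt (hf.differentiable (by simp)) t x u
  rwa [← p3_eq_fderiv (hf.differentiable (by simp)) (t, x, u)] at h


/-- If `ξ`, `η` satisfy the determining system for regular reduction operators of
the Burgers equation, then `ξ_u` is a constant belonging to `{0, 1, −1/2}`. -/
theorem stmt14 (ξ η : ℝ × ℝ × ℝ → ℝ)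
    (hξ : ContDiff ℝ (⊤ : ℕ∞) ξ) (hη : ContDiff ℝ (⊤ : ℕ∞) η)
    (h1 : ∀ p : ℝ × ℝ × ℝ, p3 (p3 ξ) p = 0)
    (h2 : ∀ p : ℝ × ℝ × ℝ,
      -2 * p3 (p2 ξ) p - 2 * p3 ξ p * ξ p + 2 * p.2.2 * p3 ξ p + p3 (p3 η) p = 0)
    (h3 : ∀ p : ℝ × ℝ × ℝ,
      2 * p3 (p2 η) p + 2 * p3 ξ p * η p + η p - p1 ξ p + p.2.2 * p2 ξ p
        - p2 (p2 ξ) p - 2 * p2 ξ p * ξ p = 0)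
    (h4 : ∀ p : ℝ × ℝ × ℝ,
      p1 η p + p.2.2 * p2 η p + p2 (p2 η) p + 2 * p2 ξ p * η p = 0) :
    ∃ c : ℝ, (c = 0 ∨ c = 1 ∨ c = -(1 / 2)) ∧ ∀ p : ℝ × ℝ × ℝ, p3 ξ p = c := by
  clear h4
  -- smoothness
  have s_b : ContDiff ℝ (⊤ : ℕ∞) (p3 ξ) := p3_smooth hξ
  have s_p2ξ : ContDiff ℝ (⊤ : ℕ∞) (p2 ξ) := p2_smooth hξ
  have s_p1ξ : ContDiff ℝ (⊤ : ℕ∞) (p1 ξ) := p1_smooth hξ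
  have s_p22ξ : ContDiff ℝ (⊤ : ℕ∞) (p2 (p2 ξ)) := p2_smooth s_p2ξ
  have s_p2b : ContDiff ℝ (⊤ : ℕ∞) (p2 (p3 ξ)) := p2_smooth s_b
  have s_p1b : ContDiff ℝ (⊤ : ℕ∞) (p1 (p3 ξ)) := p1_smooth s_b
  have s_p22b : ContDiff ℝ (⊤ : ℕ∞) (p2 (p2 (p3 ξ))) := p2_smooth s_p2b
  have s_p2η : ContDiff ℝ (⊤ : ℕ∞) (p2 η) := p2_smooth hη
  have s_p3η : ContDiff ℝ (⊤ : ℕ∞) (p3 η) := p3_smooth hη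
  have s_p32η : ContDiff ℝ (⊤ : ℕ∞) (p3 (p2 η)) := p3_smooth s_p2η
  have s_p33η : ContDiff ℝ (⊤ : ℕ∞) (p3 (p3 η)) := p3_smooth s_p3η
  have s_p332η : ContDiff ℝ (⊤ : ℕ∞) (p3 (p3 (p2 η))) := p3_smooth s_p32η
  have s_p3332η : ContDiff ℝ (⊤ : ℕ∞) (p3 (p3 (p3 (p2 η)))) := p3_smooth s_p332η
  have s_p333η : ContDiff ℝ (⊤ : ℕ∞) (p3 (p3 (p3 η))) := p3_smooth s_p33η
  -- commuting / zero facts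
  have hb0 : p3 (p3 ξ) = fun _ => (0 : ℝ) := funext h1
  have zc21 : ∀ p : ℝ × ℝ × ℝ, p3 (p2 ξ) p = p2 (p3 ξ) p := p3_p2_comm hξ
  have c21f : p3 (p2 ξ) = p2 (p3 ξ) := funext zc21
  have z1 : ∀ p : ℝ × ℝ × ℝ, p3 (p1 ξ) p = p1 (p3 ξ) p := p3_p1_comm hξ
  have zp3p2b : ∀ p : ℝ × ℝ × ℝ, p3 (p2 (p3 ξ)) p = 0 := fun p => by
    rw [p3_p2_comm s_b p, hb0, p2_zero]
  have zp3p1b : ∀ p : ℝ × ℝ × ℝ, p3 (p1 (p3 ξ)) p = 0 := fun p => by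
    rw [p3_p1_comm s_b p, hb0, p1_zero]
  have zA : ∀ p : ℝ × ℝ × ℝ, p3 (p3 (p2 ξ)) p = 0 := fun p => by
    rw [c21f]; exact zp3p2b p
  have c22pt : ∀ p : ℝ × ℝ × ℝ, p3 (p2 (p2 ξ)) p = p2 (p2 (p3 ξ)) p := fun p => by
    rw [p3_p2_comm s_p2ξ p, c21f]
  have zp3p22b : ∀ p : ℝ × ℝ × ℝ, p3 (p2 (p2 (p3 ξ))) p = 0 := fun p => by
    rw [p3_p2_comm s_p2b p, show p3 (p2 (p3 ξ)) = fun _ => (0:ℝ) from funext zp3p2b, p2_zero]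
  have cη : p3 (p2 η) = p2 (p3 η) := funext (p3_p2_comm hη)
  have cη2 : p3 (p3 (p2 η)) = p2 (p3 (p3 η)) := funext fun p => by
    rw [cη]; exact p3_p2_comm s_p3η p
  have cη3 : p3 (p3 (p3 (p2 η))) = p2 (p3 (p3 (p3 η))) := funext fun p => by
    rw [cη2]; exact p3_p2_comm s_p33η p
  -- restated hypotheses
  have h2' : ∀ t x s : ℝ,
      -2 * p3 (p2 ξ) (t, x, s) - 2 * p3 ξ (t, x, s) * ξ (t, x, s)
        + 2 * s * p3 ξ (t, x, s) + p3 (p3 η) (t, x, s) = 0 := fun t x s => h2 (t, x, s)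
  have h3' : ∀ t x s : ℝ,
      2 * p3 (p2 η) (t, x, s) + 2 * p3 ξ (t, x, s) * η (t, x, s) + η (t, x, s)
        - p1 ξ (t, x, s) + s * p2 ξ (t, x, s) - p2 (p2 ξ) (t, x, s)
        - 2 * p2 ξ (t, x, s) * ξ (t, x, s) = 0 := fun t x s => h3 (t, x, s)
  -- Step E1 : η_uuu = 2 ξ_u² − 2 ξ_u
  have E1 : ∀ p : ℝ × ℝ × ℝ, p3 (p3 (p3 η)) p = 2 * (p3 ξ p) ^ 2 - 2 * p3 ξ p := by
    rintro ⟨t, x, u⟩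
    have Hξ := hD3 hξ t x u
    have Hb := hD3 s_b t x u
    have HA := hD3 (p3_smooth s_p2ξ) t x u
    have HC := hD3 s_p33η t x u
    have H : HasDerivAt
        (fun s => -2 * p3 (p2 ξ) (t, x, s) - 2 * p3 ξ (t, x, s) * ξ (t, x, s)
          + 2 * s * p3 ξ (t, x, s) + p3 (p3 η) (t, x, s))
        (-2 * p3 (p3 (p2 ξ)) (t, x, u)
          - (2 * p3 (p3 ξ) (t, x, u) * ξ (t, x, u) + 2 * p3 ξ (t, x, u) * p3 ξ (t, x, u))
          + (2 * 1 * p3 ξ (t, x, u) + 2 * u * p3 (p3 ξ) (t, x, u))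
          + p3 (p3 (p3 η)) (t, x, u)) u := by
      exact (((HA.const_mul (-2)).sub ((Hb.const_mul 2).mul Hξ)).add
        (((hasDerivAt_id u).const_mul 2).mul Hb)).add HC
    rw [show (fun s => -2 * p3 (p2 ξ) (t, x, s) - 2 * p3 ξ (t, x, s) * ξ (t, x, s)
          + 2 * s * p3 ξ (t, x, s) + p3 (p3 η) (t, x, s)) = (fun _ => (0:ℝ)) from
        funext fun s => h2' t x s] at H
    have hD := H.unique (hasDerivAt_const u 0)
    simp only [h1, zA] at hD
    linear_combination hD
  -- Step D1 : differentiate (iii) once in u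
  have D1 : ∀ t x s : ℝ,
      2 * p3 (p3 (p2 η)) (t, x, s) + 2 * p3 ξ (t, x, s) * p3 η (t, x, s) + p3 η (t, x, s)
        - p1 (p3 ξ) (t, x, s) + p2 ξ (t, x, s) + s * p2 (p3 ξ) (t, x, s)
        - p2 (p2 (p3 ξ)) (t, x, s) - 2 * p2 (p3 ξ) (t, x, s) * ξ (t, x, s)
        - 2 * p2 ξ (t, x, s) * p3 ξ (t, x, s) = 0 := by
    intro t x u
    have Hξ := hD3 hξ t x u
    have Hb := hD3 s_b t x u
    have Hη := hD3 hη t x u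
    have HM := hD3 s_p32η t x u
    have HN := hD3 s_p3η t x u
    have HP := hD3 s_p1ξ t x u
    have HB := hD3 s_p2ξ t x u
    have HQ := hD3 s_p22ξ t x u
    have H : HasDerivAt
        (fun s => 2 * p3 (p2 η) (t, x, s) + 2 * p3 ξ (t, x, s) * η (t, x, s) + η (t, x, s)
          - p1 ξ (t, x, s) + s * p2 ξ (t, x, s) - p2 (p2 ξ) (t, x, s)
          - 2 * p2 ξ (t, x, s) * ξ (t, x, s))
        (2 * p3 (p3 (p2 η)) (t, x, u)
          + (2 * p3 (p3 ξ) (t, x, u) * η (t, x, u) + 2 * p3 ξ (t, x, u) * p3 η (t, x, u))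
          + p3 η (t, x, u) - p3 (p1 ξ) (t, x, u)
          + (1 * p2 ξ (t, x, u) + u * p3 (p2 ξ) (t, x, u))
          - p3 (p2 (p2 ξ)) (t, x, u)
          - (2 * p3 (p2 ξ) (t, x, u) * ξ (t, x, u)
            + 2 * p2 ξ (t, x, u) * p3 ξ (t, x, u))) u := by
      exact ((((((HM.const_mul 2).add ((Hb.const_mul 2).mul Hη)).add Hη).sub HP).add
        ((hasDerivAt_id u).mul HB)).sub HQ).sub ((HB.const_mul 2).mul Hξ)
    rw [show (fun s => 2 * p3 (p2 η) (t, x, s) + 2 * p3 ξ (t, x, s) * η (t, x, s) + η (t, x, s)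
          - p1 ξ (t, x, s) + s * p2 ξ (t, x, s) - p2 (p2 ξ) (t, x, s)
          - 2 * p2 ξ (t, x, s) * ξ (t, x, s)) = (fun _ => (0:ℝ)) from
        funext fun s => h3' t x s] at H
    have hD := H.unique (hasDerivAt_const u 0)
    simp only [h1, z1, zc21, c22pt] at hD
    linear_combination hD
  -- Step D2 : differentiate D1 once in u
  have D2 : ∀ t x s : ℝ,
      2 * p3 (p3 (p3 (p2 η))) (t, x, s) + 2 * p3 ξ (t, x, s) * p3 (p3 η) (t, x, s)
        + p3 (p3 η) (t, x, s) + 2 * p2 (p3 ξ) (t, x, s)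
        - 4 * p3 ξ (t, x, s) * p2 (p3 ξ) (t, x, s) = 0 := by
    intro t x u
    have Hξ := hD3 hξ t x u
    have Hb := hD3 s_b t x u
    have HM := hD3 s_p332η t x u
    have HN := hD3 s_p3η t x u
    have HY := hD3 s_p33η t x u
    have HP := hD3 s_p1b t x u
    have HB := hD3 s_p2ξ t x u
    have HZ := hD3 s_p2b t x u
    have HQ := hD3 s_p22b t x u
    have H : HasDerivAt
        (fun s => 2 * p3 (p3 (p2 η)) (t, x, s) + 2 * p3 ξ (t, x, s) * p3 η (t, x, s)
          + p3 η (t, x, s) - p1 (p3 ξ) (t, x, s) + p2 ξ (t, x, s)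
          + s * p2 (p3 ξ) (t, x, s) - p2 (p2 (p3 ξ)) (t, x, s)
          - 2 * p2 (p3 ξ) (t, x, s) * ξ (t, x, s)
          - 2 * p2 ξ (t, x, s) * p3 ξ (t, x, s))
        (2 * p3 (p3 (p3 (p2 η))) (t, x, u)
          + (2 * p3 (p3 ξ) (t, x, u) * p3 η (t, x, u)
            + 2 * p3 ξ (t, x, u) * p3 (p3 η) (t, x, u))
          + p3 (p3 η) (t, x, u) - p3 (p1 (p3 ξ)) (t, x, u)
          + p3 (p2 ξ) (t, x, u)
          + (1 * p2 (p3 ξ) (t, x, u) + u * p3 (p2 (p3 ξ)) (t, x, u))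
          - p3 (p2 (p2 (p3 ξ))) (t, x, u)
          - (2 * p3 (p2 (p3 ξ)) (t, x, u) * ξ (t, x, u)
            + 2 * p2 (p3 ξ) (t, x, u) * p3 ξ (t, x, u))
          - (2 * p3 (p2 ξ) (t, x, u) * p3 ξ (t, x, u)
            + 2 * p2 ξ (t, x, u) * p3 (p3 ξ) (t, x, u))) u := by
      exact ((((((((HM.const_mul 2).add ((Hb.const_mul 2).mul HN)).add HN).sub HP).add
        HB).add ((hasDerivAt_id u).mul HZ)).sub HQ).sub
        ((HZ.const_mul 2).mul Hξ)).sub ((HB.const_mul 2).mul Hb)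
    rw [show (fun s => 2 * p3 (p3 (p2 η)) (t, x, s) + 2 * p3 ξ (t, x, s) * p3 η (t, x, s)
          + p3 η (t, x, s) - p1 (p3 ξ) (t, x, s) + p2 ξ (t, x, s)
          + s * p2 (p3 ξ) (t, x, s) - p2 (p2 (p3 ξ)) (t, x, s)
          - 2 * p2 (p3 ξ) (t, x, s) * ξ (t, x, s)
          - 2 * p2 ξ (t, x, s) * p3 ξ (t, x, s)) = (fun _ => (0:ℝ)) from
        funext fun s => D1 t x s] at H
    have hD := H.unique (hasDerivAt_const u 0)
    simp only [h1, z1, zc21, zp3p1b, zp3p2b, zp3p22b] at hD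
    linear_combination hD
  -- η_uuuu = 0
  have E1f : p3 (p3 (p3 η)) = fun p => 2 * (p3 ξ p * p3 ξ p) - 2 * p3 ξ p :=
    funext fun p => by rw [E1 p]; ring
  have z4 : ∀ p : ℝ × ℝ × ℝ, p3 (p3 (p3 (p3 η))) p = 0 := by
    rintro ⟨t, x, u⟩
    have Hb := hD3 s_b t x u
    have H : HasDerivAt (fun s => 2 * (p3 ξ (t, x, s) * p3 ξ (t, x, s)) - 2 * p3 ξ (t, x, s))
        (2 * (p3 (p3 ξ) (t, x, u) * p3 ξ (t, x, u) + p3 ξ (t, x, u) * p3 (p3 ξ) (t, x, u))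
          - 2 * p3 (p3 ξ) (t, x, u)) u := by
      exact ((Hb.mul Hb).const_mul 2).sub (Hb.const_mul 2)
    rw [E1f, show p3 (fun p : ℝ × ℝ × ℝ => 2 * (p3 ξ p * p3 ξ p) - 2 * p3 ξ p) (t, x, u)
        = 2 * (p3 (p3 ξ) (t, x, u) * p3 ξ (t, x, u) + p3 ξ (t, x, u) * p3 (p3 ξ) (t, x, u))
          - 2 * p3 (p3 ξ) (t, x, u) from H.deriv]
    simp only [h1]
    ring
  have zS1 : ∀ p : ℝ × ℝ × ℝ, p3 (p3 (p3 (p3 (p2 η)))) p = 0 := fun p => by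
    rw [cη3, p3_p2_comm s_p333η p,
      show p3 (p3 (p3 (p3 η))) = fun _ => (0:ℝ) from funext z4, p2_zero]
  -- Step D3 : differentiate D2 once in u
  have D3 : ∀ p : ℝ × ℝ × ℝ, (2 * p3 ξ p + 1) * p3 (p3 (p3 η)) p = 0 := by
    rintro ⟨t, x, u⟩
    have Hb := hD3 s_b t x u
    have HX := hD3 s_p3332η t x u
    have HY := hD3 s_p33η t x u
    have HZ := hD3 s_p2b t x u
    have H : HasDerivAt
        (fun s => 2 * p3 (p3 (p3 (p2 η))) (t, x, s) + 2 * p3 ξ (t, x, s) * p3 (p3 η) (t, x, s)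
          + p3 (p3 η) (t, x, s) + 2 * p2 (p3 ξ) (t, x, s)
          - 4 * p3 ξ (t, x, s) * p2 (p3 ξ) (t, x, s))
        (2 * p3 (p3 (p3 (p3 (p2 η)))) (t, x, u)
          + (2 * p3 (p3 ξ) (t, x, u) * p3 (p3 η) (t, x, u)
            + 2 * p3 ξ (t, x, u) * p3 (p3 (p3 η)) (t, x, u))
          + p3 (p3 (p3 η)) (t, x, u) + 2 * p3 (p2 (p3 ξ)) (t, x, u)
          - (4 * p3 (p3 ξ) (t, x, u) * p2 (p3 ξ) (t, x, u)
            + 4 * p3 ξ (t, x, u) * p3 (p2 (p3 ξ)) (t, x, u))) u := by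
      exact ((((HX.const_mul 2).add ((Hb.const_mul 2).mul HY)).add HY).add
        (HZ.const_mul 2)).sub ((Hb.const_mul 4).mul HZ)
    rw [show (fun s => 2 * p3 (p3 (p3 (p2 η))) (t, x, s)
          + 2 * p3 ξ (t, x, s) * p3 (p3 η) (t, x, s)
          + p3 (p3 η) (t, x, s) + 2 * p2 (p3 ξ) (t, x, s)
          - 4 * p3 ξ (t, x, s) * p2 (p3 ξ) (t, x, s)) = (fun _ => (0:ℝ)) from
        funext fun s => D2 t x s] at H
    have hD := H.unique (hasDerivAt_const u 0)
    simp only [h1, zp3p2b, zS1] at hD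
    linear_combination hD
  -- pointwise classification
  have key : ∀ p : ℝ × ℝ × ℝ, p3 ξ p = 0 ∨ p3 ξ p = 1 ∨ p3 ξ p = -(1/2) := by
    intro p
    have hd := D3 p
    rw [E1 p] at hd
    have hfac : p3 ξ p * ((p3 ξ p - 1) * (2 * p3 ξ p + 1)) = 0 := by
      linear_combination hd / 2
    rcases mul_eq_zero.1 hfac with h | h
    · exact Or.inl h
    rcases mul_eq_zero.1 h with h | h
    · right; left; linarith
    · right; right; linarith
  -- constancy by connectedness
  have hcont : Continuous (p3 ξ) := s_b.continuous
  have hfin : ({0, 1, -(1/2)} : Set ℝ).Finite := Set.toFinite _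
  haveI : Finite ↥({0, 1, -(1/2)} : Set ℝ) := hfin.to_subtype
  refine ⟨p3 ξ (0, 0, 0), key (0, 0, 0), fun p => ?_⟩
  refine isPreconnected_univ.constant_of_mapsTo (T := ({0, 1, -(1/2)} : Set ℝ))
    hfin.isDiscrete hcont.continuousOn (fun q _ => ?_) (Set.mem_univ p) (Set.mem_univ _)
  rcases key q with h | h | h <;> simp [h]
end
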